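/- arXiv:1511.07306 — 3 statements merged into one kernel-verified Lean document; each statement's English description precedes it below -/
import Mathlib

section
/- Let m ≥ 18 and n ≥ m² − m + 1. Let T be a tree on n vertices and let t_1 ≠ t_2 be vertices of T such that t_1 is not a leaf of T. Then there is a vertex x ∈ V(T) and a partition of the vertex set of the forest T − x into two sets H and J with no edges of T between H and J, such that 2m − 2 ≤ |H|, |J| ≤ n − 2m + 1 and d_H(x) ≤ 2m − 2 (where d_H(x) is the number of neighbors of x in H in T), and at least one of the following holds: (1) x ∈ {t_1, t_2}; (2) x is adjacent in T to neither t_1 nor t_2; (3) {t_1, t_2} ⊆ H; (4) {t_1, t_2} ⊆ J. -/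
open Finset
set_option linter.unusedSectionVars false
set_option linter.unusedVariables false
namespace TreeSplitAux
open SimpleGraph
variable {V : Type*} [Fintype V] [DecidableEq V]
@[reducible] def del (T : SimpleGraph V) (x : V) : SimpleGraph V where
  Adj a b := T.Adj a b ∧ a ≠ x ∧ b ≠ x
  symm := ⟨by rintro a b ⟨h, ha, hb⟩; exact ⟨h.symm, hb, ha⟩⟩
  loopless := ⟨fun a h => T.irrefl h.1⟩
noncomputable def comp (T : SimpleGraph V) (x y : V) : Finset V :=
  @Finset.filter V (fun z => (del T x).Reachable y z) (Classical.decPred _) univ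
variable {T : SimpleGraph V} [DecidableRel T.Adj] {x y z u v w : V}
lemma mem_comp : z ∈ comp T x y ↔ (del T x).Reachable y z := by
  classical
  simp [comp]
lemma self_mem_comp : y ∈ comp T x y := mem_comp.2 (Reachable.refl y)
lemma not_reach_x (h : y ≠ x) : ¬ (del T x).Reachable y x := by
  intro hr; obtain ⟨p⟩ := hr.symm
  cases p with
  | nil => exact h rfl
  | cons h' _ => exact h'.2.1 rfl
lemma ne_x_of_mem (hy : y ≠ x) (hz : z ∈ comp T x y) : z ≠ x := by
  rintro rfl; exact not_reach_x hy (mem_comp.1 hz)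
lemma comp_eq_of_mem (hz : z ∈ comp T x y) : comp T x y = comp T x z := by
  have h := mem_comp.1 hz
  ext w; simp only [mem_comp]
  exact ⟨fun hw => h.symm.trans hw, fun hw => h.trans hw⟩
lemma comp_disjoint (h : comp T x y ≠ comp T x z) : Disjoint (comp T x y) (comp T x z) := by
  rw [Finset.disjoint_left]; intro a ha hb
  exact h ((comp_eq_of_mem ha).trans (comp_eq_of_mem hb).symm)
lemma reach_del_of_walk :
    ∀ {y z : V} (_ : (del T x).Walk y z), u ∉ comp T x y → (del T u).Reachable y z := by
  intro y z p
  induction p with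
  | nil => exact fun _ => Reachable.refl _
  | @cons a b c h q ih =>
    intro hu
    have hab : b ∈ comp T x a := mem_comp.2 h.reachable
    have hau : a ≠ u := fun h' => hu (h' ▸ self_mem_comp)
    have hbu : b ≠ u := fun h' => hu (h' ▸ hab)
    rw [comp_eq_of_mem hab] at hu
    exact (SimpleGraph.Adj.reachable
      (show (del T u).Adj a b from ⟨h.1, hau, hbu⟩)).trans (ih hu)
lemma reach_del_of_not_mem (hu : u ∉ comp T x y) (h : (del T x).Reachable y z) :
    (del T u).Reachable y z := by
  obtain ⟨p⟩ := h; exact reach_del_of_walk p hu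
lemma del_le_sdiff (hxu : T.Adj x u) :
    del T x ≤ T \ SimpleGraph.fromEdgeSet {s(x, u)} := by
  intro a b h
  rw [sdiff_adj]
  refine ⟨h.1, ?_⟩
  rw [fromEdgeSet_adj]
  rintro ⟨he, -⟩
  rw [Set.mem_singleton_iff, Sym2.eq_iff] at he
  rcases he with ⟨h1, -⟩ | ⟨-, h2⟩
  · exact h.2.1 h1
  · exact h.2.2 h2
lemma eq_of_adj_reach (hac : T.IsAcyclic) (hu : T.Adj x u) (hv : T.Adj x v)
    (hr : (del T x).Reachable u v) : u = v := by
  by_contra hne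
  have hb := (isAcyclic_iff_forall_adj_isBridge.mp hac) hu
  rw [isBridge_iff] at hb
  apply hb
  have h1 : (T \ SimpleGraph.fromEdgeSet {s(x, u)}).Reachable u v := hr.mono (del_le_sdiff hu)
  have h2 : (T \ SimpleGraph.fromEdgeSet {s(x, u)}).Adj v x := by
    rw [sdiff_adj]
    refine ⟨hv.symm, ?_⟩
    rw [fromEdgeSet_adj]
    rintro ⟨he, -⟩
    rw [Set.mem_singleton_iff, Sym2.eq_iff] at he
    rcases he with ⟨-, h3⟩ | ⟨h3, -⟩
    · exact hu.ne h3
    · exact hne h3.symm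
  exact h2.reachable.symm.trans h1.symm
lemma exists_adj_comp_aux {z w : V} (p : T.Walk z w) :
    w = x → z ≠ x → ∃ u, T.Adj x u ∧ (del T x).Reachable z u := by
  induction p with
  | nil => exact fun hw hz => absurd hw hz
  | @cons a b c h q ih =>
    intro hw hz
    by_cases hb : b = x
    · subst hb; exact ⟨a, h.symm, Reachable.refl a⟩
    · obtain ⟨u, hu, hr⟩ := ih hw hb
      exact ⟨u, hu, (SimpleGraph.Adj.reachable
        (show (del T x).Adj a b from ⟨h, hz, hb⟩)).trans hr⟩
lemma exists_adj_comp (hc : T.Connected) (hz : z ≠ x) :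
    ∃ u, T.Adj x u ∧ u ∈ comp T x z := by
  obtain ⟨p⟩ := hc.preconnected z x
  obtain ⟨u, hu, hr⟩ := exists_adj_comp_aux p rfl hz
  exact ⟨u, hu, mem_comp.2 hr⟩

-- ### Centroid
lemma exists_centroid (hT : T.IsTree) (h2 : 2 ≤ Fintype.card V) :
    ∃ x : V, ∀ y, y ≠ x → 2 * (comp T x y).card ≤ Fintype.card V := by
  have : Nonempty V := Fintype.card_pos_iff.mp (by omega)
  obtain ⟨x, -, hmin⟩ := Finset.exists_min_image (univ : Finset V)
    (fun x => (univ \ {x}).sup fun y => (comp T x y).card) univ_nonempty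
  refine ⟨x, ?_⟩
  by_contra hbad
  push_neg at hbad
  obtain ⟨y, hyx, hy⟩ := hbad
  set C := comp T x y with hC
  have hCbig : Fintype.card V < 2 * C.card := hy
  have hCpos : 0 < C.card := by omega
  obtain ⟨u, hxu, huC⟩ := exists_adj_comp hT.isConnected hyx
  have hCu : C = comp T x u := comp_eq_of_mem huC
  have hux : u ≠ x := hxu.ne'
  -- every component of T - u is smaller than C
  have key : ∀ z, z ≠ u → (comp T u z).card < C.card := by
    intro z hzu
    by_cases hxz : x ∈ comp T u z
    · -- this component is the one containing x; it avoids C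
      have hsub : comp T u z ⊆ univ \ C := by
        rw [comp_eq_of_mem hxz]
        intro w hw
        rw [Finset.mem_sdiff]
        refine ⟨mem_univ _, fun hwC => ?_⟩
        have hbr := (isAcyclic_iff_forall_adj_isBridge.mp hT.IsAcyclic) hxu
        rw [isBridge_iff] at hbr
        apply hbr
        have hle1 : del T u ≤ T \ SimpleGraph.fromEdgeSet {s(x, u)} := by
          rw [Sym2.eq_swap]; exact del_le_sdiff hxu.symm
        have R1 : (T \ SimpleGraph.fromEdgeSet {s(x, u)}).Reachable x w :=
          (mem_comp.1 hw).mono hle1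
        have huw : w ∈ comp T x u := hCu ▸ hwC
        have R2 : (T \ SimpleGraph.fromEdgeSet {s(x, u)}).Reachable u w :=
          (mem_comp.1 huw).mono (del_le_sdiff hxu)
        exact R1.trans R2.symm
      have := Finset.card_le_card hsub
      rw [Finset.card_sdiff_of_subset (Finset.subset_univ C), Finset.card_univ] at this
      omega
    · have hsub : comp T u z ⊆ C.erase u := by
        intro w hw
        rw [Finset.mem_erase]
        have hwu : w ≠ u := ne_x_of_mem hzu hw
        refine ⟨hwu, ?_⟩
        have hwx : w ≠ x := fun h' => hxz (h' ▸ hw)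
        by_contra hwC
        have hunm : u ∉ comp T x w := by
          intro h'
          have h1 : comp T x w = comp T x u := comp_eq_of_mem h'
          exact hwC (hCu.trans h1.symm ▸ self_mem_comp)
        obtain ⟨u', hxu', hru'⟩ := exists_adj_comp hT.isConnected hwx
        have R : (del T u).Reachable w u' := reach_del_of_not_mem hunm (mem_comp.1 hru')
        have hu'u : u' ≠ u := fun h' => hunm (h' ▸ hru')
        have hadj : (del T u).Adj u' x := ⟨hxu'.symm, hu'u, hxu.ne⟩
        have : (del T u).Reachable z x := (mem_comp.1 hw).trans (R.trans hadj.reachable)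
        exact hxz (mem_comp.2 this)
      have h1 := Finset.card_le_card hsub
      have h2 : (C.erase u).card = C.card - 1 :=
        Finset.card_erase_of_mem (hCu ▸ self_mem_comp)
      omega
  have hlt : ((univ \ {u}).sup fun z => (comp T u z).card) < C.card := by
    rw [Finset.sup_lt_iff hCpos]
    intro z hz
    exact key z fun h => (Finset.mem_sdiff.1 hz).2 (Finset.mem_singleton.2 h)
  have hge : C.card ≤ (univ \ {x}).sup fun y => (comp T x y).card := by
    rw [hC]
    exact Finset.le_sup (f := fun y => (comp T x y).card)
      (Finset.mem_sdiff.2 ⟨mem_univ _, fun h => hyx (Finset.mem_singleton.1 h)⟩)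
  have := hmin u (mem_univ u)
  omega

-- ### Greedy grouping
lemma greedy {α : Type*} [DecidableEq α] (M t : ℕ) :
    ∀ (k : ℕ) (P A0 : Finset (Finset α)), (P \ A0).card ≤ k → A0 ⊆ P →
      (∀ p ∈ P, ∀ q ∈ P, p ≠ q → Disjoint p q) → (∀ p ∈ P, p.Nonempty) →
      (∀ p ∈ P, p.card ≤ M) → t ≤ (P.biUnion id).card → (A0.biUnion id).card < t →
      ∃ A, A0 ⊆ A ∧ A ⊆ P ∧ t ≤ (A.biUnion id).card ∧
        (A.biUnion id).card ≤ t - 1 + M ∧ A.card ≤ t := by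
  intro k
  induction k with
  | zero =>
    intro P A0 hk hsub _ _ _ htot hlt
    have hPA : P = A0 :=
      (Finset.sdiff_eq_empty_iff_subset.mp (Finset.card_eq_zero.mp (Nat.le_zero.mp hk))).antisymm
        hsub
    rw [hPA] at htot; omega
  | succ k ih =>
    intro P A0 hk hsub hdisj hne hM htot hlt
    have hPA : (P \ A0).Nonempty := by
      rw [Finset.sdiff_nonempty]
      intro hPs
      rw [hPs.antisymm hsub] at htot; omega
    obtain ⟨p, hp⟩ := hPA
    rw [Finset.mem_sdiff] at hp
    set A1 := insert p A0 with hA1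
    have hsub1 : A1 ⊆ P := Finset.insert_subset hp.1 hsub
    have hU1 : A1.biUnion id = p ∪ A0.biUnion id := Finset.biUnion_insert
    have hcard1 : (A1.biUnion id).card ≤ M + (t - 1) := by
      rw [hU1]
      have := Finset.card_union_le p (A0.biUnion id)
      have := hM p hp.1
      omega
    have hA0card : A0.card ≤ (A0.biUnion id).card := by
      have h1 : (A0.biUnion id).card = ∑ q ∈ A0, q.card :=
        Finset.card_biUnion fun a ha b hb hab => hdisj a (hsub ha) b (hsub hb) hab
      have h2 : ∑ q ∈ A0, 1 ≤ ∑ q ∈ A0, q.card :=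
        Finset.sum_le_sum fun q hq => (hne q (hsub hq)).card_pos
      simpa [h1] using h2
    by_cases hbig : t ≤ (A1.biUnion id).card
    · refine ⟨A1, Finset.subset_insert _ _, hsub1, hbig, by omega, ?_⟩
      have hci := Finset.card_insert_le p A0
      rw [← hA1] at hci
      omega
    · have hk1 : (P \ A1).card ≤ k := by
        have hss : P \ A1 ⊆ (P \ A0).erase p := by
          intro q hq
          rw [Finset.mem_sdiff, hA1, Finset.mem_insert] at hq
          rw [Finset.mem_erase, Finset.mem_sdiff]
          push_neg at hq
          exact ⟨hq.2.1, hq.1, hq.2.2⟩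
        have h1 := Finset.card_le_card hss
        have h2 : ((P \ A0).erase p).card = (P \ A0).card - 1 :=
          Finset.card_erase_of_mem (Finset.mem_sdiff.2 hp)
        have h3 : 0 < (P \ A0).card := Finset.card_pos.2 ⟨p, Finset.mem_sdiff.2 hp⟩
        omega
    -- recurse
      obtain ⟨A, hA1A, hAP, h1, h2, h3⟩ := ih P A1 hk1 hsub1 hdisj hne hM htot (by omega)
      exact ⟨A, (Finset.subset_insert _ _).trans hA1A, hAP, h1, h2, h3⟩


-- ### Assembly
lemma comp_of_mem_image {A : Finset (Finset V)}
    (hA : A ⊆ (univ \ {x}).image (fun y => comp T x y)) {p : Finset V} (hp : p ∈ A)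
    (hz : z ∈ p) : comp T x z = p ∧ z ≠ x := by
  obtain ⟨y, hy, rfl⟩ := Finset.mem_image.1 (hA hp)
  have hyx : y ≠ x := by
    have := (Finset.mem_sdiff.1 hy).2
    exact fun h => this (Finset.mem_singleton.2 h)
  exact ⟨(comp_eq_of_mem hz).symm, ne_x_of_mem hyx hz⟩

lemma mem_biUnion_iff {A : Finset (Finset V)}
    (hA : A ⊆ (univ \ {x}).image (fun y => comp T x y)) (hz : z ≠ x) :
    z ∈ A.biUnion id ↔ comp T x z ∈ A := by
  constructor
  · intro h
    obtain ⟨p, hp, hzp⟩ := Finset.mem_biUnion.1 h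
    rw [(comp_of_mem_image hA hp hzp).1]
    exact hp
  · intro h
    exact Finset.mem_biUnion.2 ⟨comp T x z, h, self_mem_comp⟩

lemma assemble (hT : T.IsTree) {m n : ℕ}
    (hcard : Fintype.card V = n) (h9 : 9 * m ≤ n) (hm : 18 ≤ m)
    (A : Finset (Finset V)) (hA : A ⊆ (univ \ {x}).image (fun y => comp T x y))
    (hlow : 2 * m - 2 ≤ (A.biUnion id).card)
    (hhigh : (A.biUnion id).card ≤ n - 2 * m + 1)
    (hAcard : A.card ≤ 2 * m - 2) :
    Disjoint (A.biUnion id) ((univ \ {x}) \ A.biUnion id) ∧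
    A.biUnion id ∪ ((univ \ {x}) \ A.biUnion id) = univ \ {x} ∧
    (∀ a ∈ A.biUnion id, ∀ b ∈ (univ \ {x}) \ A.biUnion id, ¬ T.Adj a b) ∧
    2 * m - 2 ≤ (A.biUnion id).card ∧ (A.biUnion id).card ≤ n - 2 * m + 1 ∧
    2 * m - 2 ≤ ((univ \ {x}) \ A.biUnion id).card ∧
    ((univ \ {x}) \ A.biUnion id).card ≤ n - 2 * m + 1 ∧
    (T.neighborFinset x ∩ A.biUnion id).card ≤ 2 * m - 2 := by
  have hHsub : A.biUnion id ⊆ univ \ {x} := by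
    intro z hz
    obtain ⟨p, hp, hzp⟩ := Finset.mem_biUnion.1 hz
    exact Finset.mem_sdiff.2 ⟨mem_univ _,
      fun h => (comp_of_mem_image hA hp hzp).2 (Finset.mem_singleton.1 h)⟩
  have hxcard : (univ \ {x} : Finset V).card = n - 1 := by
    rw [Finset.card_sdiff_of_subset (Finset.subset_univ _), Finset.card_univ, hcard,
      Finset.card_singleton]
  refine ⟨Finset.disjoint_sdiff, Finset.union_sdiff_of_subset hHsub, ?_, hlow, hhigh, ?_, ?_, ?_⟩
  · intro a ha b hb hadj
    have hbJ := Finset.mem_sdiff.1 hb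
    have hbx : b ≠ x := fun h => (Finset.mem_sdiff.1 hbJ.1).2 (Finset.mem_singleton.2 h)
    obtain ⟨p, hp, hap⟩ := Finset.mem_biUnion.1 ha
    obtain ⟨hca, hax⟩ := comp_of_mem_image hA hp hap
    have : b ∈ comp T x a := mem_comp.2 (SimpleGraph.Adj.reachable ⟨hadj, hax, hbx⟩)
    exact hbJ.2 (Finset.mem_biUnion.2 ⟨p, hp, hca ▸ this⟩)
  · have := Finset.card_sdiff_of_subset hHsub
    rw [hxcard] at this
    omega
  · have := Finset.card_sdiff_of_subset hHsub
    rw [hxcard] at this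
    omega
  · calc (T.neighborFinset x ∩ A.biUnion id).card ≤ A.card := by
          refine Finset.card_le_card_of_injOn (fun u => comp T x u) ?_ ?_
          · intro a ha
            obtain ⟨p, hp, hap⟩ := Finset.mem_biUnion.1 (Finset.mem_inter.1 ha).2
            show comp T x a ∈ A
            rw [(comp_of_mem_image hA hp hap).1]
            exact hp
          · intro a ha b hb hab
            have hab' : comp T x a = comp T x b := hab
            have hTa : T.Adj x a := (SimpleGraph.mem_neighborFinset _ _ _).1
              (Finset.mem_inter.1 ha).1
            have hTb : T.Adj x b := (SimpleGraph.mem_neighborFinset _ _ _).1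
              (Finset.mem_inter.1 hb).1
            exact eq_of_adj_reach hT.IsAcyclic hTa hTb
              (mem_comp.1 (hab' ▸ self_mem_comp : b ∈ comp T x a))
        _ ≤ 2 * m - 2 := hAcard

lemma assembleBad (hT : T.IsTree) {m n : ℕ}
    (hcard : Fintype.card V = n) (h9 : 9 * m ≤ n) (hm : 18 ≤ m)
    (hxw : T.Adj x w)
    (hChigh : 2 * (comp T x w).card ≤ n)
    (hClow : n + 2 ≤ 2 * (comp T x w).card + 4 * m) :
    Disjoint (univ \ comp T x w) ((comp T x w).erase w) ∧
    (univ \ comp T x w) ∪ (comp T x w).erase w = univ \ {w} ∧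
    (∀ a ∈ univ \ comp T x w, ∀ b ∈ (comp T x w).erase w, ¬ T.Adj a b) ∧
    2 * m - 2 ≤ (univ \ comp T x w).card ∧ (univ \ comp T x w).card ≤ n - 2 * m + 1 ∧
    2 * m - 2 ≤ ((comp T x w).erase w).card ∧
    ((comp T x w).erase w).card ≤ n - 2 * m + 1 ∧
    (T.neighborFinset w ∩ (univ \ comp T x w)).card ≤ 2 * m - 2 := by
  set C := comp T x w with hC
  have hwx : w ≠ x := hxw.ne'
  have hwC : w ∈ C := self_mem_comp
  have hHcard : (univ \ C : Finset V).card = n - C.card := by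
    rw [Finset.card_sdiff_of_subset (Finset.subset_univ _), Finset.card_univ, hcard]
  have hJcard : (C.erase w).card = C.card - 1 := Finset.card_erase_of_mem hwC
  refine ⟨Finset.sdiff_disjoint.mono_right (Finset.erase_subset _ _), ?_, ?_, ?_, ?_, ?_, ?_, ?_⟩
  · ext z
    simp only [Finset.mem_union, Finset.mem_sdiff, Finset.mem_univ, true_and,
      Finset.mem_erase, Finset.mem_singleton]
    by_cases hz : z ∈ C
    · by_cases hzw : z = w
      · subst hzw; simp [hz]
      · simp [hz, hzw]
    · have : z ≠ w := fun h => hz (h ▸ hwC)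
      simp [hz, this]
  · intro a ha b hb hadj
    have haC : a ∉ C := (Finset.mem_sdiff.1 ha).2
    have hbC : b ∈ C := (Finset.mem_erase.1 hb).2
    have hbw : b ≠ w := (Finset.mem_erase.1 hb).1
    have hbx : b ≠ x := ne_x_of_mem hwx hbC
    by_cases hax : a = x
    · subst hax
      exact hbw (eq_of_adj_reach hT.IsAcyclic hxw hadj (mem_comp.1 hbC)).symm
    · apply haC
      have : a ∈ comp T x b := mem_comp.2 (SimpleGraph.Adj.reachable ⟨hadj.symm, hbx, hax⟩)
      rw [hC, comp_eq_of_mem (show b ∈ comp T x w from hbC)]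
      exact this
  · omega
  · omega
  · omega
  · omega
  · have hsub : T.neighborFinset w ∩ (univ \ C) ⊆ {x} := by
      intro a ha
      have h1 : T.Adj w a := (SimpleGraph.mem_neighborFinset _ _ _).1 (Finset.mem_inter.1 ha).1
      have h2 : a ∉ C := (Finset.mem_sdiff.1 (Finset.mem_inter.1 ha).2).2
      rw [Finset.mem_singleton]
      by_contra hax
      exact h2 (mem_comp.2 (SimpleGraph.Adj.reachable ⟨h1, hwx, hax⟩))
    have := Finset.card_le_card hsub
    rw [Finset.card_singleton] at this
    omega


end TreeSplitAux

open TreeSplitAux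

/-- **Claim 4.5**: for `m ≥ 18`, `n ≥ m² - m + 1`, a tree `T` on `n` vertices and vertices
`t₁ ≠ t₂` with `t₁` not a leaf, there is a vertex `x` and a partition of `T - x` into `H`
and `J` with no edges between them, `2m - 2 ≤ |H|, |J| ≤ n - 2m + 1`, `d_H(x) ≤ 2m - 2`,
and one of: `x ∈ {t₁, t₂}`; `x` adjacent to neither `t₁` nor `t₂`; `{t₁, t₂} ⊆ H`;
`{t₁, t₂} ⊆ J`. -/
theorem tree_split_respecting_two_vertices {V : Type*} [Fintype V] [DecidableEq V]
    (m n : ℕ) (hm : 18 ≤ m) (hn : m ^ 2 - m + 1 ≤ n)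
    (T : SimpleGraph V) [DecidableRel T.Adj] (hT : T.IsTree) (hTcard : Fintype.card V = n)
    (t1 t2 : V) (ht12 : t1 ≠ t2) (ht1 : T.degree t1 ≠ 1) :
    ∃ (x : V) (H J : Finset V), Disjoint H J ∧ H ∪ J = univ \ {x} ∧
      (∀ a ∈ H, ∀ b ∈ J, ¬ T.Adj a b) ∧
      2 * m - 2 ≤ H.card ∧ H.card ≤ n - 2 * m + 1 ∧
      2 * m - 2 ≤ J.card ∧ J.card ≤ n - 2 * m + 1 ∧
      (T.neighborFinset x ∩ H).card ≤ 2 * m - 2 ∧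
      (x = t1 ∨ x = t2 ∨ (¬ T.Adj x t1 ∧ ¬ T.Adj x t2) ∨
        (t1 ∈ H ∧ t2 ∈ H) ∨ (t1 ∈ J ∧ t2 ∈ J)) := by
  classical
  -- arithmetic preliminaries
  have h9 : 9 * m ≤ n := by
    have h1 : 18 * m ≤ m ^ 2 := by
      rw [pow_two]
      exact Nat.mul_le_mul_right m hm
    obtain ⟨N, hN⟩ : ∃ N, m ^ 2 = N := ⟨_, rfl⟩
    rw [hN] at hn h1
    omega
  have hn2 : 2 ≤ Fintype.card V := by omega
  -- centroid
  obtain ⟨x, hx⟩ := exists_centroid hT hn2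
  rw [hTcard] at hx
  set P := (univ \ {x}).image (fun y => comp T x y) with hP
  have hPdisj : ∀ p ∈ P, ∀ q ∈ P, p ≠ q → Disjoint p q := by
    intro p hp q hq hpq
    obtain ⟨a, -, rfl⟩ := Finset.mem_image.1 hp
    obtain ⟨b, -, rfl⟩ := Finset.mem_image.1 hq
    exact comp_disjoint hpq
  have hPne : ∀ p ∈ P, p.Nonempty := by
    intro p hp
    obtain ⟨a, -, rfl⟩ := Finset.mem_image.1 hp
    exact ⟨a, self_mem_comp⟩
  have hPM : ∀ p ∈ P, p.card ≤ n / 2 := by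
    intro p hp
    obtain ⟨a, ha, rfl⟩ := Finset.mem_image.1 hp
    have hax : a ≠ x := fun h => (Finset.mem_sdiff.1 ha).2 (Finset.mem_singleton.2 h)
    have := hx a hax
    omega
  have hPU : P.biUnion id = univ \ {x} := by
    apply Finset.Subset.antisymm
    · rw [Finset.biUnion_subset]
      intro p hp z hz
      obtain ⟨a, ha, rfl⟩ := Finset.mem_image.1 hp
      have hax : a ≠ x := fun h => (Finset.mem_sdiff.1 ha).2 (Finset.mem_singleton.2 h)
      exact Finset.mem_sdiff.2 ⟨mem_univ _,
        fun h => ne_x_of_mem hax hz (Finset.mem_singleton.1 h)⟩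
    · intro z hz
      have hzx : z ≠ x := fun h => (Finset.mem_sdiff.1 hz).2 (Finset.mem_singleton.2 h)
      exact Finset.mem_biUnion.2 ⟨comp T x z, Finset.mem_image.2 ⟨z, hz, rfl⟩, self_mem_comp⟩
  have hPUcard : (P.biUnion id).card = n - 1 := by
    rw [hPU, Finset.card_sdiff_of_subset (Finset.subset_univ _), Finset.card_univ, hTcard,
      Finset.card_singleton]
  have hmemP : ∀ z : V, z ≠ x → comp T x z ∈ P := by
    intro z hz
    exact Finset.mem_image.2 ⟨z, Finset.mem_sdiff.2 ⟨mem_univ _,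
      fun h => hz (Finset.mem_singleton.1 h)⟩, rfl⟩
  -- generic construction from a suitable family of components
  have finish : ∀ A : Finset (Finset V), A ⊆ P →
      2 * m - 2 ≤ (A.biUnion id).card → (A.biUnion id).card ≤ n - 2 * m + 1 →
      A.card ≤ 2 * m - 2 →
      (x = t1 ∨ x = t2 ∨ (¬ T.Adj x t1 ∧ ¬ T.Adj x t2) ∨
        (t1 ∈ A.biUnion id ∧ t2 ∈ A.biUnion id) ∨
        (t1 ∈ (univ \ {x}) \ A.biUnion id ∧ t2 ∈ (univ \ {x}) \ A.biUnion id)) →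
      ∃ (x' : V) (H J : Finset V), Disjoint H J ∧ H ∪ J = univ \ {x'} ∧
      (∀ a ∈ H, ∀ b ∈ J, ¬ T.Adj a b) ∧
      2 * m - 2 ≤ H.card ∧ H.card ≤ n - 2 * m + 1 ∧
      2 * m - 2 ≤ J.card ∧ J.card ≤ n - 2 * m + 1 ∧
      (T.neighborFinset x' ∩ H).card ≤ 2 * m - 2 ∧
      (x' = t1 ∨ x' = t2 ∨ (¬ T.Adj x' t1 ∧ ¬ T.Adj x' t2) ∨
        (t1 ∈ H ∧ t2 ∈ H) ∨ (t1 ∈ J ∧ t2 ∈ J)) := by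
    intro A hAP h1 h2 h3 hcond
    obtain ⟨d1, d2, d3, d4, d5, d6, d7, d8⟩ :=
      assemble (x := x) hT hTcard h9 hm A (hP ▸ hAP) h1 h2 h3
    exact ⟨x, A.biUnion id, (univ \ {x}) \ A.biUnion id,
      d1, d2, d3, d4, d5, d6, d7, d8, hcond⟩
  -- unseeded greedy choice
  have unseeded : ∃ A, A ⊆ P ∧ 2 * m - 2 ≤ (A.biUnion id).card ∧
      (A.biUnion id).card ≤ n - 2 * m + 1 ∧ A.card ≤ 2 * m - 2 := by
    obtain ⟨A, -, hAP, hAl, hAh, hAc⟩ := greedy (n / 2) (2 * m - 2) P.card P ∅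
      (by simp) (Finset.empty_subset _) hPdisj hPne hPM (by omega) (by simp; omega)
    exact ⟨A, hAP, hAl, by omega, hAc⟩
  by_cases hxt1 : x = t1
  · obtain ⟨A, hAP, h1, h2, h3⟩ := unseeded
    exact finish A hAP h1 h2 h3 (Or.inl hxt1)
  by_cases hxt2 : x = t2
  · obtain ⟨A, hAP, h1, h2, h3⟩ := unseeded
    exact finish A hAP h1 h2 h3 (Or.inr (Or.inl hxt2))
  by_cases hadjs : ¬ T.Adj x t1 ∧ ¬ T.Adj x t2
  · obtain ⟨A, hAP, h1, h2, h3⟩ := unseeded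
    exact finish A hAP h1 h2 h3 (Or.inr (Or.inr (Or.inl hadjs)))
  have ht1x : t1 ≠ x := fun h => hxt1 h.symm
  have ht2x : t2 ≠ x := fun h => hxt2 h.symm
  by_cases hcc : comp T x t1 = comp T x t2
  · obtain ⟨A, hAP, h1, h2, h3⟩ := unseeded
    refine finish A hAP h1 h2 h3 ?_
    by_cases hmem : comp T x t1 ∈ A
    · refine Or.inr (Or.inr (Or.inr (Or.inl ⟨?_, ?_⟩)))
      · exact (mem_biUnion_iff (hP ▸ hAP) ht1x).2 hmem
      · exact (mem_biUnion_iff (hP ▸ hAP) ht2x).2 (hcc ▸ hmem)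
    · refine Or.inr (Or.inr (Or.inr (Or.inr ⟨?_, ?_⟩)))
      · refine Finset.mem_sdiff.2 ⟨Finset.mem_sdiff.2 ⟨mem_univ _,
          fun h => ht1x (Finset.mem_singleton.1 h)⟩, fun h => hmem ?_⟩
        exact (mem_biUnion_iff (hP ▸ hAP) ht1x).1 h
      · refine Finset.mem_sdiff.2 ⟨Finset.mem_sdiff.2 ⟨mem_univ _,
          fun h => ht2x (Finset.mem_singleton.1 h)⟩, fun h => hmem ?_⟩
        exact hcc ▸ ((mem_biUnion_iff (hP ▸ hAP) ht2x).1 h)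
  · have hC1P : comp T x t1 ∈ P := hmemP t1 ht1x
    have hC2P : comp T x t2 ∈ P := hmemP t2 ht2x
    have hd12 : Disjoint (comp T x t1) (comp T x t2) := comp_disjoint hcc
    have hA0 : (({comp T x t1, comp T x t2} : Finset (Finset V)).biUnion id).card =
        (comp T x t1).card + (comp T x t2).card := by
      rw [show ({comp T x t1, comp T x t2} : Finset (Finset V)) =
        insert (comp T x t1) {comp T x t2} from rfl, Finset.biUnion_insert,
        Finset.singleton_biUnion]
      exact Finset.card_union_of_disjoint hd12
    have hA0sub : ({comp T x t1, comp T x t2} : Finset (Finset V)) ⊆ P := by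
      intro p hp
      rcases Finset.mem_insert.1 hp with h | h
      · exact h ▸ hC1P
      · exact (Finset.mem_singleton.1 h) ▸ hC2P
    by_cases hsize : (comp T x t1).card + (comp T x t2).card ≤ n - 2 * m + 1
    · -- seed with both components
      have hseed : ∃ A, A ⊆ P ∧ comp T x t1 ∈ A ∧ comp T x t2 ∈ A ∧
          2 * m - 2 ≤ (A.biUnion id).card ∧ (A.biUnion id).card ≤ n - 2 * m + 1 ∧
          A.card ≤ 2 * m - 2 := by
        by_cases hbig : 2 * m - 2 ≤
            (({comp T x t1, comp T x t2} : Finset (Finset V)).biUnion id).card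
        · refine ⟨{comp T x t1, comp T x t2}, hA0sub, Finset.mem_insert_self _ _,
            Finset.mem_insert_of_mem (Finset.mem_singleton_self _), hbig, by omega, ?_⟩
          have := Finset.card_insert_le (comp T x t1) ({comp T x t2} : Finset (Finset V))
          rw [Finset.card_singleton] at this
          omega
        · obtain ⟨A, hA0A, hAP, hAl, hAh, hAc⟩ := greedy (n / 2) (2 * m - 2) P.card P
            {comp T x t1, comp T x t2} (Finset.card_le_card (Finset.sdiff_subset))
            hA0sub hPdisj hPne hPM (by omega) (by omega)
          exact ⟨A, hAP, hA0A (Finset.mem_insert_self _ _),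
            hA0A (Finset.mem_insert_of_mem (Finset.mem_singleton_self _)), hAl,
            by omega, hAc⟩
      obtain ⟨A, hAP, hm1, hm2, h1, h2, h3⟩ := hseed
      refine finish A hAP h1 h2 h3 (Or.inr (Or.inr (Or.inr (Or.inl ⟨?_, ?_⟩))))
      · exact Finset.mem_biUnion.2 ⟨comp T x t1, hm1, self_mem_comp⟩
      · exact Finset.mem_biUnion.2 ⟨comp T x t2, hm2, self_mem_comp⟩
    · -- bad case: both components are big; pick t1 or t2 itself as the cut vertex
      have hc1 := hx t1 ht1x
      have hc2 := hx t2 ht2x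
      by_cases hadj1 : T.Adj x t1
      · obtain ⟨d1, d2, d3, d4, d5, d6, d7, d8⟩ :=
          assembleBad (w := t1) hT hTcard h9 hm hadj1 hc1 (by omega)
        exact ⟨t1, univ \ comp T x t1, (comp T x t1).erase t1,
          d1, d2, d3, d4, d5, d6, d7, d8, Or.inl rfl⟩
      · have hadj2 : T.Adj x t2 := by tauto
        obtain ⟨d1, d2, d3, d4, d5, d6, d7, d8⟩ :=
          assembleBad (w := t2) hT hTcard h9 hm hadj2 hc2 (by omega)
        exact ⟨t2, univ \ comp T x t2, (comp T x t2).erase t2,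
          d1, d2, d3, d4, d5, d6, d7, d8, Or.inr (Or.inl rfl)⟩
end

section
/- Let m ≥ 18 and n ≥ m² − m + 1. Let U be a connected graph with n vertices and exactly n edges that is not a cycle, and let t_1t_2 be an edge of the unique cycle of U such that t_1 is not a leaf of the tree T = U − t_1t_2. Let G be a graph whose complement Ḡ does not contain U as a subgraph, and suppose U_1 and U_2 are disjoint independent sets of G, each of size at least n − 2m + 2, such that there exist two disjoint edges of Ḡ between U_1 and U_2 (i.e., distinct y_1, y_2 ∈ U_1 and distinct z_1, z_2 ∈ U_2 with y_1z_1 and y_2z_2 edges of Ḡ). Then every vertex w ∈ U_1 has at most 2m − 2 neighbors in U_2 in Ḡ, and every vertex w ∈ U_2 has at most 2m − 2 neighbors in U_1 in Ḡ. -/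
open Finset

/-- `Contains G H` means `G` contains a subgraph isomorphic to `H`, i.e. there is an
injective map on vertices preserving adjacency. -/
def Contains {α β : Type*} (G : SimpleGraph α) (H : SimpleGraph β) : Prop :=
  ∃ f : β → α, Function.Injective f ∧ ∀ ⦃u v⦄, H.Adj u v → G.Adj (f u) (f v)

open SimpleGraph
set_option linter.unusedSectionVars false
set_option linter.unusedVariables false
set_option maxHeartbeats 2000000

section TreeLemmas
variable {V : Type*} [Fintype V] [DecidableEq V]

open Classical in
noncomputable def side (T : SimpleGraph V) (u v : V) : Finset V :=
  Finset.univ.filter fun x => (T.deleteEdges {s(u,v)}).Reachable v x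

lemma mem_side {T : SimpleGraph V} {u v x : V} :
    x ∈ side T u v ↔ (T.deleteEdges {s(u,v)}).Reachable v x := by
  classical simp [side]

lemma self_mem_side {T : SimpleGraph V} {u v : V} : v ∈ side T u v :=
  mem_side.2 (Reachable.refl v)

lemma side_swap_edge {T : SimpleGraph V} {u v : V} :
    T.deleteEdges {s(v,u)} = T.deleteEdges {s(u,v)} := by rw [Sym2.eq_swap]

lemma mem_side' {T : SimpleGraph V} {u v x : V} :
    x ∈ side T v u ↔ (T.deleteEdges {s(u,v)}).Reachable u x := by
  rw [mem_side, side_swap_edge]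

lemma bridge_of_tree {T : SimpleGraph V} (hT : T.IsTree) {u v : V} (h : T.Adj u v) :
    ¬ (T.deleteEdges {s(u,v)}).Reachable u v := by
  have := (isAcyclic_iff_forall_adj_isBridge.mp hT.IsAcyclic) h
  rw [isBridge_iff] at this
  exact this

lemma not_mem_side_of_mem_side {T : SimpleGraph V} (hT : T.IsTree) {u v x : V}
    (h : T.Adj u v) (hx : x ∈ side T u v) : x ∉ side T v u := by
  intro hx'
  rw [mem_side] at hx
  rw [mem_side'] at hx'
  exact bridge_of_tree hT h (hx'.trans hx.symm)

lemma side_total {T : SimpleGraph V} (hT : T.IsTree) {u v : V} (h : T.Adj u v) (x : V) :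
    x ∈ side T u v ∨ x ∈ side T v u := by
  have hreach : T.Reachable u x := (hT.isConnected) u x
  rw [mem_side, mem_side']
  obtain ⟨p⟩ := hreach
  suffices H : ∀ a x : V, T.Walk a x →
      ((T.deleteEdges {s(u,v)}).Reachable v a ∨ (T.deleteEdges {s(u,v)}).Reachable u a) →
      ((T.deleteEdges {s(u,v)}).Reachable v x ∨ (T.deleteEdges {s(u,v)}).Reachable u x) from
    H u x p (Or.inr (Reachable.refl u))
  intro a x p
  induction p with
  | nil => exact id
  | @cons a b x hab p ih =>
    intro base
    apply ih
    by_cases he : s(a,b) = s(u,v)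
    · rw [Sym2.eq_iff] at he
      rcases he with ⟨rfl, rfl⟩ | ⟨rfl, rfl⟩
      · exact Or.inl (Reachable.refl _)
      · exact Or.inr (Reachable.refl _)
    · have hadj : (T.deleteEdges {s(u,v)}).Adj a b := by
        simp [deleteEdges_adj, hab, he]
      rcases base with h1 | h2
      · exact Or.inl (h1.trans hadj.reachable)
      · exact Or.inr (h2.trans hadj.reachable)

lemma mem_support_of_mem_edges' {G : SimpleGraph V} {x a b : V} {e : Sym2 V}
    (p : G.Walk a b) (he : e ∈ p.edges) (hx : x ∈ e) : x ∈ p.support := by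
  induction e with
  | h c d =>
    rw [Sym2.mem_iff] at hx
    rcases hx with rfl | rfl
    · exact p.fst_mem_support_of_mem_edges he
    · exact p.snd_mem_support_of_mem_edges he

lemma reach_avoid {T : SimpleGraph V} (hT : T.IsTree) {u v z : V} (h : T.Adj u v)
    (hz : z ∈ side T u v) (e2 : Sym2 V) (hue2 : u ∈ e2) :
    (T.deleteEdges {e2}).Reachable v z := by
  rw [mem_side] at hz
  obtain ⟨p⟩ := hz
  have hu : u ∉ p.support := by
    intro hu
    exact bridge_of_tree hT h ((p.takeUntil u hu).reachable).symm
  refine ⟨p.transfer _ ?_⟩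
  intro e he
  have h1 : e ∈ (T.deleteEdges {s(u,v)}).edgeSet := p.edges_subset_edgeSet he
  rw [edgeSet_deleteEdges] at h1 ⊢
  refine ⟨h1.1, ?_⟩
  simp only [Set.mem_singleton_iff]
  rintro rfl
  exact hu (mem_support_of_mem_edges' p he hue2)

lemma side_union {T : SimpleGraph V} (hT : T.IsTree) {u v : V} (h : T.Adj u v) :
    side T u v ∪ side T v u = Finset.univ := by
  ext x
  simp only [Finset.mem_union, Finset.mem_univ, iff_true]
  exact side_total hT h x

lemma side_card {T : SimpleGraph V} (hT : T.IsTree) {u v : V} (h : T.Adj u v) :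
    (side T u v).card + (side T v u).card = Fintype.card V := by
  rw [← Finset.card_union_of_disjoint, side_union hT h, Finset.card_univ]
  rw [Finset.disjoint_left]
  exact fun a ha => not_mem_side_of_mem_side hT h ha

lemma side_crossing {T : SimpleGraph V} (hT : T.IsTree) {u v a b : V} (h : T.Adj u v)
    (h2 : T.Adj a b) (ha : a ∈ side T v u) (hb : b ∈ side T u v) : a = u ∧ b = v := by
  by_cases he : s(a,b) = s(u,v)
  · rw [Sym2.eq_iff] at he
    rcases he with ⟨rfl, rfl⟩ | ⟨rfl, rfl⟩
    · exact ⟨rfl, rfl⟩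
    · exact (not_mem_side_of_mem_side hT h hb self_mem_side).elim
  · exfalso
    have hadj : (T.deleteEdges {s(u,v)}).Adj a b := by simp [deleteEdges_adj, h2, he]
    have : a ∈ side T u v := mem_side.2 ((mem_side.1 hb).trans hadj.symm.reachable)
    exact not_mem_side_of_mem_side hT h this ha

-- components around a hub
lemma comp_disjoint {T : SimpleGraph V} (hT : T.IsTree) {h x x' : V}
    (hx : T.Adj h x) (hx' : T.Adj h x') (hne : x ≠ x') :
    Disjoint (side T h x) (side T h x') := by
  rw [Finset.disjoint_left]
  intro z hz hz'
  have h1 : (T.deleteEdges {s(h,x')}).Reachable x z := reach_avoid hT hx hz _ (by simp)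
  have h2 : (T.deleteEdges {s(h,x')}).Reachable x' z := mem_side.1 hz'
  have hhx : (T.deleteEdges {s(h,x')}).Adj h x := by
    simp only [deleteEdges_adj, Set.mem_singleton_iff]
    refine ⟨hx, fun hc => ?_⟩
    rw [Sym2.eq_iff] at hc
    rcases hc with ⟨-, rfl⟩ | ⟨h1, h2⟩
    · exact hne rfl
    · exact T.loopless.irrefl _ (h2 ▸ hx)
  exact bridge_of_tree hT hx' (hhx.reachable.trans (h1.trans h2.symm))

lemma not_hub_mem_side {T : SimpleGraph V} (hT : T.IsTree) {h x : V} (hx : T.Adj h x) :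
    h ∉ side T h x :=
  not_mem_side_of_mem_side hT hx.symm self_mem_side

lemma comp_total {T : SimpleGraph V} (hT : T.IsTree) (h : V) (z : V) :
    z = h ∨ ∃ x, T.Adj h x ∧ z ∈ side T h x := by
  obtain ⟨p⟩ := (hT.isConnected) h z
  suffices H : ∀ a z : V, T.Walk a z → (a = h ∨ ∃ x, T.Adj h x ∧ a ∈ side T h x) →
      (z = h ∨ ∃ x, T.Adj h x ∧ z ∈ side T h x) from H h z p (Or.inl rfl)
  intro a z p
  induction p with
  | nil => exact id
  | @cons a b z hab p ih =>
    intro base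
    apply ih
    by_cases hbh : b = h
    · exact Or.inl hbh
    rcases base with rfl | ⟨x, hx, hax⟩
    · exact Or.inr ⟨b, hab, self_mem_side⟩
    · refine Or.inr ⟨x, hx, ?_⟩
      by_cases he : s(a,b) = s(h,x)
      · rw [Sym2.eq_iff] at he
        rcases he with ⟨rfl, rfl⟩ | ⟨rfl, rfl⟩
        · exact (not_hub_mem_side hT hx hax).elim
        · exact (hbh rfl).elim
      · have hadj : (T.deleteEdges {s(h,x)}).Adj a b := by simp [deleteEdges_adj, hab, he]
        exact mem_side.2 ((mem_side.1 hax).trans hadj.reachable)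

lemma cross_comp {T : SimpleGraph V} (hT : T.IsTree) {h x a b : V} (hab : T.Adj a b)
    (hx : T.Adj h x) (hb : b ∈ side T h x) (ha : a ∉ side T h x) : a = h ∧ b = x := by
  by_cases he : s(a,b) = s(h,x)
  · rw [Sym2.eq_iff] at he
    rcases he with ⟨rfl, rfl⟩ | ⟨rfl, rfl⟩
    · exact ⟨rfl, rfl⟩
    · exact (not_hub_mem_side hT hx hb).elim
  · exfalso
    have hadj : (T.deleteEdges {s(h,x)}).Adj a b := by simp [deleteEdges_adj, hab, he]
    exact ha (mem_side.2 ((mem_side.1 hb).trans hadj.symm.reachable))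

lemma side_shrink {T : SimpleGraph V} (hT : T.IsTree) {u v x : V} (huv : T.Adj u v)
    (hvx : T.Adj v x) (hxu : x ≠ u) : side T v x ⊆ side T u v := by
  intro z hz
  have h1 : (T.deleteEdges {s(u,v)}).Reachable x z := reach_avoid hT hvx hz _ (by simp)
  have hadj : (T.deleteEdges {s(u,v)}).Adj v x := by
    simp only [deleteEdges_adj, Set.mem_singleton_iff]
    refine ⟨hvx, fun hc => ?_⟩
    rw [Sym2.eq_iff] at hc
    rcases hc with ⟨rfl, -⟩ | ⟨-, h2⟩
    · exact T.loopless.irrefl _ huv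
    · exact hxu h2
  exact mem_side.2 (hadj.reachable.trans h1)

lemma comp_partition {T : SimpleGraph V} [DecidableRel T.Adj] (hT : T.IsTree) (h : V) :
    1 + ∑ x ∈ T.neighborFinset h, (side T h x).card = Fintype.card V := by
  classical
  set s := (T.neighborFinset h).biUnion (fun x => side T h x) with hs
  have hhs : h ∉ s := by
    simp only [hs, Finset.mem_biUnion, mem_neighborFinset, not_exists]
    exact fun x hx => not_hub_mem_side hT hx.1 hx.2
  have huniv : insert h s = Finset.univ := by
    apply Finset.eq_univ_of_forall
    intro z
    rcases comp_total hT h z with rfl | ⟨x, hx, hz⟩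
    · exact Finset.mem_insert_self _ _
    · exact Finset.mem_insert_of_mem (Finset.mem_biUnion.2 ⟨x, (mem_neighborFinset _ _ _).2 hx, hz⟩)
  have hcard : s.card = ∑ x ∈ T.neighborFinset h, (side T h x).card := by
    apply Finset.card_biUnion
    intro x hx y hy hxy
    exact comp_disjoint hT ((mem_neighborFinset _ _ _).1 hx) ((mem_neighborFinset _ _ _).1 hy) hxy
  calc 1 + ∑ x ∈ T.neighborFinset h, (side T h x).card = (insert h s).card := by
        rw [Finset.card_insert_of_notMem hhs, hcard, add_comm]
      _ = Fintype.card V := by rw [huniv, Finset.card_univ]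

lemma tree_dichotomy {T : SimpleGraph V} [Nonempty V] (hT : T.IsTree) (L R : ℕ)
    (hsum : L + R = Fintype.card V) :
    (∃ u v, T.Adj u v ∧ L ≤ (side T u v).card ∧ (side T u v).card ≤ R) ∨
    (∃ h : V, ∀ x, T.Adj h x → (side T h x).card < L) := by
  classical
  by_cases hbal : ∃ u v, T.Adj u v ∧ L ≤ (side T u v).card ∧ (side T u v).card ≤ R
  · exact Or.inl hbal
  push_neg at hbal
  right
  set Heavy := Finset.univ.filter (fun p : V × V => T.Adj p.1 p.2 ∧ R < (side T p.1 p.2).card)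
    with hH
  by_cases hHe : Heavy = ∅
  · obtain ⟨a⟩ := ‹Nonempty V›
    refine ⟨a, fun x hx => ?_⟩
    have hnotheavy : ¬ (R < (side T a x).card) := by
      intro hc
      have : (a, x) ∈ Heavy := by
        simp only [hH, Finset.mem_filter, Finset.mem_univ, true_and]
        exact ⟨hx, hc⟩
      rw [hHe] at this; exact absurd this (Finset.notMem_empty _)
    rcases lt_or_ge ((side T a x).card) L with h1 | h1
    · exact h1
    · exact absurd (hbal _ _ hx h1) (by omega)
  · obtain ⟨p, hp, hmin⟩ := Finset.exists_min_image Heavy (fun p => (side T p.1 p.2).card)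
      (Finset.nonempty_of_ne_empty hHe)
    obtain ⟨u, v⟩ := p
    simp only [hH, Finset.mem_filter, Finset.mem_univ, true_and] at hp
    obtain ⟨huv, hRuv⟩ := hp
    refine ⟨v, fun x hx => ?_⟩
    by_cases hxu : x = u
    · have hc := side_card hT huv
      rw [hxu]
      dsimp only at hmin
      omega
    · have hsub : side T v x ⊆ side T u v := side_shrink hT huv hx hxu
      have hlt : (side T v x).card < (side T u v).card := by
        apply Finset.card_lt_card
        rw [Finset.ssubset_iff_of_subset hsub]
        exact ⟨v, self_mem_side, not_hub_mem_side hT hx⟩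
      rcases lt_or_ge ((side T v x).card) L with h1 | h1
      · exact h1
      rcases le_or_gt ((side T v x).card) R with h2 | h2
      · exact absurd (hbal _ _ hx h1) (by omega)
      · have : (v, x) ∈ Heavy := by
          simp only [hH, Finset.mem_filter, Finset.mem_univ, true_and]
          exact ⟨hx, h2⟩
        have hminv := hmin (v, x) this
        dsimp only at hminv
        omega

end TreeLemmas

section Helpers

lemma exists_injOn_finset {α β : Type*} [DecidableEq α] [DecidableEq β] (b0 : β)
    (S : Finset α) (T : Finset β) (h : S.card ≤ T.card) :
    ∃ g : α → β, Set.InjOn g ↑S ∧ ∀ a ∈ S, g a ∈ T := by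
  classical
  induction S using Finset.induction_on generalizing T with
  | empty => exact ⟨fun _ => b0, by simp, by simp⟩
  | @insert a S ha ih =>
    have hT : T.Nonempty := by
      rw [← Finset.card_pos]
      have := Finset.card_insert_of_notMem ha
      omega
    obtain ⟨t, ht⟩ := hT
    have hle : S.card ≤ (T.erase t).card := by
      rw [Finset.card_erase_of_mem ht]
      have := Finset.card_insert_of_notMem ha
      omega
    obtain ⟨g, hginj, hgmem⟩ := ih (T.erase t) hle
    refine ⟨Function.update g a t, ?_, ?_⟩
    · intro x hx y hy hxy
      simp only [Finset.coe_insert, Set.mem_insert_iff, Finset.mem_coe] at hx hy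
      rcases hx with rfl | hx
      · rcases hy with rfl | hy
        · rfl
        · exfalso
          rw [Function.update_self, Function.update_of_ne (by rintro rfl; exact ha hy)] at hxy
          exact (Finset.ne_of_mem_erase (hgmem y hy)) hxy.symm
      · rcases hy with rfl | hy
        · exfalso
          rw [Function.update_self, Function.update_of_ne (by rintro rfl; exact ha hx)] at hxy
          exact (Finset.ne_of_mem_erase (hgmem x hx)) hxy
        · rw [Function.update_of_ne (by rintro rfl; exact ha hx),
            Function.update_of_ne (by rintro rfl; exact ha hy)] at hxy
          exact hginj hx hy hxy
    · intro x hx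
      rcases Finset.mem_insert.1 hx with rfl | hx2
      · simp [ht]
      · rw [Function.update_of_ne (by rintro rfl; exact ha hx2)]
        exact Finset.mem_of_mem_erase (hgmem x hx2)

lemma greedy_select {ι : Type*} [DecidableEq ι] (L K : ℕ) (s : ι → ℕ) :
    ∀ (k : ℕ) (I X0 : Finset ι), (I \ X0).card ≤ k → X0 ⊆ I →
    (∀ i ∈ I, 1 ≤ s i) → (∀ i ∈ I, i ∉ X0 → s i ≤ K) → L ≤ ∑ i ∈ I, s i →
    ∃ X : Finset ι, X0 ⊆ X ∧ X ⊆ I ∧ L ≤ ∑ i ∈ X, s i ∧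
      ∑ i ∈ X, s i ≤ max (∑ i ∈ X0, s i) (L - 1 + K) ∧ X.card ≤ max X0.card L := by
  intro k
  induction k with
  | zero =>
    intro I X0 hk hsub hpos hK htot
    have : I \ X0 = ∅ := Finset.card_eq_zero.1 (Nat.le_zero.1 hk)
    have hIX : I = X0 := Finset.Subset.antisymm (fun i hi => by
      by_contra hc
      exact Finset.notMem_empty i (this ▸ Finset.mem_sdiff.2 ⟨hi, hc⟩)) hsub
    exact ⟨X0, Finset.Subset.refl _, hsub, by rw [← hIX]; exact htot, le_max_left _ _,
      le_max_left _ _⟩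
  | succ k ih =>
    intro I X0 hk hsub hpos hK htot
    by_cases hdone : L ≤ ∑ i ∈ X0, s i
    · exact ⟨X0, Finset.Subset.refl _, hsub, hdone, le_max_left _ _, le_max_left _ _⟩
    push_neg at hdone
    have hne : (I \ X0).Nonempty := by
      rw [Finset.sdiff_nonempty]
      intro hc
      have : I = X0 := Finset.Subset.antisymm hc hsub
      exact absurd (this ▸ htot) (by omega)
    obtain ⟨i, hi⟩ := hne
    rw [Finset.mem_sdiff] at hi
    have hcard0 : X0.card ≤ ∑ i ∈ X0, s i :=
      Finset.card_nsmul_le_sum X0 s 1 (fun j hj => hpos j (hsub hj)) |>.trans_eq' (by simp)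
    obtain ⟨X, h1, h2, h3, h4, h5⟩ := ih I (insert i X0) (by
        have : I \ insert i X0 = (I \ X0).erase i := by
          ext j; simp [Finset.mem_sdiff, Finset.mem_erase, and_comm, not_or]; tauto
        rw [this]
        have hmem : i ∈ I \ X0 := Finset.mem_sdiff.2 hi
        rw [Finset.card_erase_of_mem hmem]
        omega)
      (Finset.insert_subset hi.1 hsub) hpos (fun j hj hj2 => hK j hj (fun hc => hj2 (Finset.mem_insert_of_mem hc))) htot
    have hsum0 : ∑ j ∈ insert i X0, s j = s i + ∑ j ∈ X0, s j :=
      Finset.sum_insert hi.2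
    have hsi : s i ≤ K := hK i hi.1 hi.2
    refine ⟨X, (Finset.subset_insert _ _).trans h1, h2, h3, ?_, ?_⟩
    · refine h4.trans ?_
      apply max_le
      · rw [hsum0]; omega
      · exact le_max_right _ _
    · refine h5.trans ?_
      apply max_le
      · rw [Finset.card_insert_of_notMem hi.2]
        have : X0.card + 1 ≤ L := by omega
        exact this.trans (le_max_right _ _)
      · exact le_max_right _ _

end Helpers

section Embed
variable {V W : Type*} [Fintype V] [Fintype W] [DecidableEq V] [DecidableEq W]

/-- Embedding lemma, no special edge. -/
lemma emb0 (U : SimpleGraph V) (G : SimpleGraph W) [DecidableRel G.Adj]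
    (U1 U2 : Finset W) (hdisj : Disjoint U1 U2)
    (hind1 : ∀ a ∈ U1, ∀ b ∈ U1, ¬ G.Adj a b)
    (hind2 : ∀ a ∈ U2, ∀ b ∈ U2, ¬ G.Adj a b)
    (w : W) (hw : w ∈ U1)
    (B : Finset V) (h : V) (hh : h ∉ B) (D : Finset V) (hD : D ⊆ B)
    (hA : ((Finset.univ : Finset V) \ B).card ≤ U1.card) (hB : B.card ≤ U2.card)
    (hDN : D.card ≤ (Gᶜ.neighborFinset w ∩ U2).card)
    (hcross : ∀ u v : V, U.Adj u v → u ∉ B → v ∈ B → u = h ∧ v ∈ D) :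
    Contains Gᶜ U := by
  classical
  set N := Gᶜ.neighborFinset w ∩ U2 with hN
  have hNU2 : N ⊆ U2 := Finset.inter_subset_right
  have hwU2 : w ∉ U2 := fun hc => (Finset.disjoint_left.1 hdisj) hw hc
  obtain ⟨gD, hgDinj, hgDmem⟩ := exists_injOn_finset w D N hDN
  set ND := D.image gD with hND
  have hNDcard : ND.card = D.card := Finset.card_image_of_injOn hgDinj
  have hNDsub : ND ⊆ U2 := by
    intro x hx
    obtain ⟨d, hd, rfl⟩ := Finset.mem_image.1 hx
    exact hNU2 (hgDmem d hd)
  obtain ⟨gB, hgBinj, hgBmem⟩ := exists_injOn_finset w (B \ D) (U2 \ ND) (by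
    rw [Finset.card_sdiff_of_subset hD, Finset.card_sdiff_of_subset hNDsub, hNDcard]
    omega)
  obtain ⟨gA, hgAinj, hgAmem⟩ := exists_injOn_finset w ((Finset.univ \ B).erase h)
    (U1.erase w) (by
      rw [Finset.card_erase_of_mem (Finset.mem_sdiff.2 ⟨Finset.mem_univ _, hh⟩),
        Finset.card_erase_of_mem hw]
      omega)
  set f : V → W := fun v => if v = h then w else if v ∈ D then gD v else if v ∈ B then gB v
    else gA v with hf
  -- region facts
  have rh : f h = w := by simp [hf]
  have rD : ∀ v ∈ D, f v = gD v := by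
    intro v hv
    have : v ≠ h := fun hc => hh (hc ▸ hD hv)
    simp [hf, this, hv]
  have rB : ∀ v ∈ B, v ∉ D → f v = gB v := by
    intro v hv hv2
    have : v ≠ h := fun hc => hh (hc ▸ hv)
    simp [hf, this, hv, hv2]
  have rA : ∀ v, v ∉ B → v ≠ h → f v = gA v := by
    intro v hv hv2
    have : v ∉ D := fun hc => hv (hD hc)
    simp [hf, hv, hv2, this]
  have memB : ∀ v ∈ B, f v ∈ U2 := by
    intro v hv
    by_cases hvD : v ∈ D
    · rw [rD v hvD]; exact hNU2 (hgDmem v hvD)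
    · rw [rB v hv hvD]
      exact Finset.mem_sdiff.1 (hgBmem v (Finset.mem_sdiff.2 ⟨hv, hvD⟩)) |>.1
  have memA : ∀ v, v ∉ B → f v ∈ U1 := by
    intro v hv
    by_cases hvh : v = h
    · subst hvh; rw [rh]; exact hw
    · rw [rA v hv hvh]
      exact Finset.mem_of_mem_erase (hgAmem v (Finset.mem_erase.2 ⟨hvh,
        Finset.mem_sdiff.2 ⟨Finset.mem_univ _, hv⟩⟩))
  -- injectivity on B
  have injB : ∀ v1 ∈ B, ∀ v2 ∈ B, f v1 = f v2 → v1 = v2 := by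
    intro v1 hv1 v2 hv2 heq
    by_cases h1 : v1 ∈ D <;> by_cases h2 : v2 ∈ D
    · exact hgDinj h1 h2 (by rwa [rD v1 h1, rD v2 h2] at heq)
    · exfalso
      rw [rD v1 h1, rB v2 hv2 h2] at heq
      have : gB v2 ∉ ND := (Finset.mem_sdiff.1 (hgBmem v2 (Finset.mem_sdiff.2 ⟨hv2, h2⟩))).2
      exact this (heq ▸ Finset.mem_image_of_mem gD h1)
    · exfalso
      rw [rB v1 hv1 h1, rD v2 h2] at heq
      have : gB v1 ∉ ND := (Finset.mem_sdiff.1 (hgBmem v1 (Finset.mem_sdiff.2 ⟨hv1, h1⟩))).2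
      exact this (heq ▸ Finset.mem_image_of_mem gD h2)
    · exact hgBinj (Finset.mem_coe.2 (Finset.mem_sdiff.2 ⟨hv1, h1⟩))
        (Finset.mem_coe.2 (Finset.mem_sdiff.2 ⟨hv2, h2⟩))
        (by rwa [rB v1 hv1 h1, rB v2 hv2 h2] at heq)
  have injA : ∀ v1, v1 ∉ B → ∀ v2, v2 ∉ B → f v1 = f v2 → v1 = v2 := by
    intro v1 hv1 v2 hv2 heq
    by_cases h1 : v1 = h <;> by_cases h2 : v2 = h
    · rw [h1, h2]
    · exfalso
      subst h1
      rw [rh, rA v2 hv2 h2] at heq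
      exact (Finset.mem_erase.1 (hgAmem v2 (Finset.mem_erase.2 ⟨h2,
        Finset.mem_sdiff.2 ⟨Finset.mem_univ _, hv2⟩⟩))).1 heq.symm
    · exfalso
      subst h2
      rw [rh, rA v1 hv1 h1] at heq
      exact (Finset.mem_erase.1 (hgAmem v1 (Finset.mem_erase.2 ⟨h1,
        Finset.mem_sdiff.2 ⟨Finset.mem_univ _, hv1⟩⟩))).1 heq
    · refine hgAinj ?_ ?_ (by rwa [rA v1 hv1 h1, rA v2 hv2 h2] at heq) <;>
        · apply Finset.mem_coe.2
          exact Finset.mem_erase.2 ⟨‹_›, Finset.mem_sdiff.2 ⟨Finset.mem_univ _, ‹_›⟩⟩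
  have hinj : Function.Injective f := by
    intro v1 v2 heq
    by_cases h1 : v1 ∈ B <;> by_cases h2 : v2 ∈ B
    · exact injB v1 h1 v2 h2 heq
    · exact ((Finset.disjoint_left.1 hdisj) (memA v2 h2) (heq ▸ memB v1 h1)).elim
    · exact ((Finset.disjoint_left.1 hdisj) (memA v1 h1)
        (show f v1 ∈ U2 by rw [heq]; exact memB v2 h2)).elim
    · exact injA v1 h1 v2 h2 heq
  refine ⟨f, hinj, ?_⟩
  intro u v hadj
  have hne : f u ≠ f v := fun hc => hadj.ne (hinj hc)
  by_cases h1 : u ∈ B <;> by_cases h2 : v ∈ B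
  · exact (G.compl_adj _ _).2 ⟨hne, hind2 _ (memB u h1) _ (memB v h2)⟩
  · -- u ∈ B, v ∉ B
    obtain ⟨hvh, huD⟩ := hcross v u hadj.symm h2 h1
    subst hvh
    rw [rh]
    have : f u ∈ N := by rw [rD u huD]; exact hgDmem u huD
    have := Finset.mem_inter.1 this |>.1
    exact ((mem_neighborFinset _ _ _).1 this).symm
  · obtain ⟨huh, hvD⟩ := hcross u v hadj h1 h2
    subst huh
    rw [rh]
    have : f v ∈ N := by rw [rD v hvD]; exact hgDmem v hvD
    have := Finset.mem_inter.1 this |>.1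
    exact (mem_neighborFinset _ _ _).1 this
  · exact (G.compl_adj _ _).2 ⟨hne, hind1 _ (memA u h1) _ (memA v h2)⟩

/-- Embedding lemma with one special edge. -/
lemma embS (U : SimpleGraph V) (G : SimpleGraph W) [DecidableRel G.Adj]
    (U1 U2 : Finset W) (hdisj : Disjoint U1 U2)
    (hind1 : ∀ a ∈ U1, ∀ b ∈ U1, ¬ G.Adj a b)
    (hind2 : ∀ a ∈ U2, ∀ b ∈ U2, ¬ G.Adj a b)
    (w : W) (hw : w ∈ U1)
    (B : Finset V) (h : V) (hh : h ∉ B) (D : Finset V) (hD : D ⊆ B)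
    (a b : V) (haB : a ∉ B) (hah : a ≠ h) (hbB : b ∈ B) (hbD : b ∉ D)
    (y z : W) (hyU1 : y ∈ U1) (hzU2 : z ∈ U2) (hyw : y ≠ w) (hyz : Gᶜ.Adj y z)
    (hA : ((Finset.univ : Finset V) \ B).card ≤ U1.card) (hB : B.card ≤ U2.card)
    (hDN : D.card ≤ ((Gᶜ.neighborFinset w ∩ U2).erase z).card)
    (hcross : ∀ u v : V, U.Adj u v → u ∉ B → v ∈ B →
      (u = h ∧ v ∈ D) ∨ (u = a ∧ v = b)) :
    Contains Gᶜ U := by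
  classical
  set N := Gᶜ.neighborFinset w ∩ U2 with hN
  have hNU2 : N ⊆ U2 := Finset.inter_subset_right
  have hwU2 : w ∉ U2 := fun hc => (Finset.disjoint_left.1 hdisj) hw hc
  have hzU1 : z ∉ U1 := fun hc => (Finset.disjoint_left.1 hdisj) hc hzU2
  obtain ⟨gD, hgDinj, hgDmem⟩ := exists_injOn_finset w D (N.erase z) hDN
  set ND := D.image gD with hND
  have hNDcard : ND.card = D.card := Finset.card_image_of_injOn hgDinj
  have hNDN : ND ⊆ N.erase z := by
    intro x hx
    obtain ⟨d, hd, rfl⟩ := Finset.mem_image.1 hx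
    exact hgDmem d hd
  have hzND : z ∉ ND := fun hc => (Finset.mem_erase.1 (hNDN hc)).1 rfl
  have hNDsub : ND ⊆ U2 := fun x hx => hNU2 (Finset.mem_of_mem_erase (hNDN hx))
  have hinsSub : insert z ND ⊆ U2 := Finset.insert_subset hzU2 hNDsub
  obtain ⟨gB, hgBinj, hgBmem⟩ := exists_injOn_finset w ((B \ D).erase b)
      (U2 \ insert z ND) (by
    rw [Finset.card_erase_of_mem (Finset.mem_sdiff.2 ⟨hbB, hbD⟩), Finset.card_sdiff_of_subset hD,
      Finset.card_sdiff_of_subset hinsSub, Finset.card_insert_of_notMem hzND, hNDcard]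
    omega)
  obtain ⟨gA, hgAinj, hgAmem⟩ := exists_injOn_finset w (((Finset.univ \ B).erase h).erase a)
    ((U1.erase w).erase y) (by
      rw [Finset.card_erase_of_mem (Finset.mem_erase.2 ⟨hah,
          Finset.mem_sdiff.2 ⟨Finset.mem_univ _, haB⟩⟩),
        Finset.card_erase_of_mem (Finset.mem_sdiff.2 ⟨Finset.mem_univ _, hh⟩),
        Finset.card_erase_of_mem (Finset.mem_erase.2 ⟨hyw, hyU1⟩),
        Finset.card_erase_of_mem hw]
      omega)
  have hbh : b ≠ h := fun hc => hh (hc ▸ hbB)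
  have hba : b ≠ a := fun hc => haB (hc ▸ hbB)
  set f : V → W := fun v => if v = h then w else if v = a then y else if v = b then z
    else if v ∈ D then gD v else if v ∈ B then gB v else gA v with hf
  have rh : f h = w := by simp [hf]
  have ra : f a = y := by simp [hf, hah]
  have rb : f b = z := by simp [hf, hbh, hba]
  have rD : ∀ v ∈ D, f v = gD v := by
    intro v hv
    have h1 : v ≠ h := fun hc => hh (hc ▸ hD hv)
    have h2 : v ≠ a := fun hc => haB (hc ▸ hD hv)
    have h3 : v ≠ b := fun hc => hbD (hc ▸ hv)
    simp [hf, h1, h2, h3, hv]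
  have rB : ∀ v ∈ B, v ∉ D → v ≠ b → f v = gB v := by
    intro v hv hv2 hv3
    have h1 : v ≠ h := fun hc => hh (hc ▸ hv)
    have h2 : v ≠ a := fun hc => haB (hc ▸ hv)
    simp [hf, h1, h2, hv3, hv2, hv]
  have rA : ∀ v, v ∉ B → v ≠ h → v ≠ a → f v = gA v := by
    intro v hv hv2 hv3
    have h3 : v ≠ b := fun hc => hv (hc ▸ hbB)
    have h4 : v ∉ D := fun hc => hv (hD hc)
    simp [hf, hv, hv2, hv3, h3, h4]
  have gBfact : ∀ v, v ∈ B → v ∉ D → v ≠ b → gB v ∈ U2 \ insert z ND := fun v hv h2 h3 =>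
    hgBmem v (Finset.mem_erase.2 ⟨h3, Finset.mem_sdiff.2 ⟨hv, h2⟩⟩)
  have gAfact : ∀ v, v ∉ B → v ≠ h → v ≠ a → gA v ∈ (U1.erase w).erase y := fun v hv h2 h3 =>
    hgAmem v (Finset.mem_erase.2 ⟨h3, Finset.mem_erase.2 ⟨h2,
      Finset.mem_sdiff.2 ⟨Finset.mem_univ _, hv⟩⟩⟩)
  have memB : ∀ v ∈ B, f v ∈ U2 := by
    intro v hv
    by_cases h3 : v = b
    · subst h3; rw [rb]; exact hzU2
    by_cases h2 : v ∈ D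
    · rw [rD v h2]; exact hNU2 (Finset.mem_of_mem_erase (hgDmem v h2))
    · rw [rB v hv h2 h3]
      exact (Finset.mem_sdiff.1 (gBfact v hv h2 h3)).1
  have memA : ∀ v, v ∉ B → f v ∈ U1 := by
    intro v hv
    by_cases h2 : v = h
    · subst h2; rw [rh]; exact hw
    by_cases h3 : v = a
    · subst h3; rw [ra]; exact hyU1
    · rw [rA v hv h2 h3]
      exact Finset.mem_of_mem_erase (Finset.mem_of_mem_erase (gAfact v hv h2 h3))
  have injB : ∀ v1 ∈ B, ∀ v2 ∈ B, f v1 = f v2 → v1 = v2 := by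
    intro v1 hv1 v2 hv2 heq
    by_cases e1 : v1 = b <;> by_cases e2 : v2 = b
    · rw [e1, e2]
    · exfalso
      subst e1
      rw [rb] at heq
      by_cases d2 : v2 ∈ D
      · rw [rD v2 d2] at heq
        exact (Finset.mem_erase.1 (hgDmem v2 d2)).1 heq.symm
      · rw [rB v2 hv2 d2 e2] at heq
        exact (Finset.mem_sdiff.1 (gBfact v2 hv2 d2 e2)).2 (heq ▸ Finset.mem_insert_self _ _)
    · exfalso
      subst e2
      rw [rb] at heq
      by_cases d1 : v1 ∈ D
      · rw [rD v1 d1] at heq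
        exact (Finset.mem_erase.1 (hgDmem v1 d1)).1 heq
      · rw [rB v1 hv1 d1 e1] at heq
        exact (Finset.mem_sdiff.1 (gBfact v1 hv1 d1 e1)).2 (heq ▸ Finset.mem_insert_self _ _)
    · by_cases d1 : v1 ∈ D <;> by_cases d2 : v2 ∈ D
      · exact hgDinj d1 d2 (by rwa [rD v1 d1, rD v2 d2] at heq)
      · exfalso
        rw [rD v1 d1, rB v2 hv2 d2 e2] at heq
        exact (Finset.mem_sdiff.1 (gBfact v2 hv2 d2 e2)).2
          (Finset.mem_insert_of_mem (heq ▸ Finset.mem_image_of_mem gD d1))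
      · exfalso
        rw [rB v1 hv1 d1 e1, rD v2 d2] at heq
        exact (Finset.mem_sdiff.1 (gBfact v1 hv1 d1 e1)).2
          (Finset.mem_insert_of_mem (heq ▸ Finset.mem_image_of_mem gD d2))
      · exact hgBinj (Finset.mem_coe.2 (Finset.mem_erase.2 ⟨e1, Finset.mem_sdiff.2 ⟨hv1, d1⟩⟩))
          (Finset.mem_coe.2 (Finset.mem_erase.2 ⟨e2, Finset.mem_sdiff.2 ⟨hv2, d2⟩⟩))
          (by rwa [rB v1 hv1 d1 e1, rB v2 hv2 d2 e2] at heq)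
  have injA : ∀ v1, v1 ∉ B → ∀ v2, v2 ∉ B → f v1 = f v2 → v1 = v2 := by
    intro v1 hv1 v2 hv2 heq
    by_cases e1 : v1 = h <;> by_cases e2 : v2 = h
    · rw [e1, e2]
    · exfalso
      subst e1; rw [rh] at heq
      by_cases a2 : v2 = a
      · subst a2; rw [ra] at heq; exact hyw heq.symm
      · rw [rA v2 hv2 e2 a2] at heq
        exact (Finset.mem_erase.1 (Finset.mem_of_mem_erase (gAfact v2 hv2 e2 a2))).1 heq.symm
    · exfalso
      subst e2; rw [rh] at heq
      by_cases a1 : v1 = a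
      · subst a1; rw [ra] at heq; exact hyw heq
      · rw [rA v1 hv1 e1 a1] at heq
        exact (Finset.mem_erase.1 (Finset.mem_of_mem_erase (gAfact v1 hv1 e1 a1))).1 heq
    · by_cases a1 : v1 = a <;> by_cases a2 : v2 = a
      · rw [a1, a2]
      · exfalso
        subst a1; rw [ra] at heq
        rw [rA v2 hv2 e2 a2] at heq
        exact (Finset.mem_erase.1 (gAfact v2 hv2 e2 a2)).1 heq.symm
      · exfalso
        subst a2; rw [ra] at heq
        rw [rA v1 hv1 e1 a1] at heq
        exact (Finset.mem_erase.1 (gAfact v1 hv1 e1 a1)).1 heq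
      · exact hgAinj
          (Finset.mem_coe.2 (Finset.mem_erase.2 ⟨a1, Finset.mem_erase.2 ⟨e1,
            Finset.mem_sdiff.2 ⟨Finset.mem_univ _, hv1⟩⟩⟩))
          (Finset.mem_coe.2 (Finset.mem_erase.2 ⟨a2, Finset.mem_erase.2 ⟨e2,
            Finset.mem_sdiff.2 ⟨Finset.mem_univ _, hv2⟩⟩⟩))
          (by rwa [rA v1 hv1 e1 a1, rA v2 hv2 e2 a2] at heq)
  have hinj : Function.Injective f := by
    intro v1 v2 heq
    by_cases h1 : v1 ∈ B <;> by_cases h2 : v2 ∈ B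
    · exact injB v1 h1 v2 h2 heq
    · exact ((Finset.disjoint_left.1 hdisj) (memA v2 h2) (heq ▸ memB v1 h1)).elim
    · exact ((Finset.disjoint_left.1 hdisj) (memA v1 h1)
        (show f v1 ∈ U2 by rw [heq]; exact memB v2 h2)).elim
    · exact injA v1 h1 v2 h2 heq
  refine ⟨f, hinj, ?_⟩
  intro u v hadj
  have hne : f u ≠ f v := fun hc => hadj.ne (hinj hc)
  have key : ∀ u v : V, U.Adj u v → u ∉ B → v ∈ B → Gᶜ.Adj (f u) (f v) := by
    intro u v hadj h1 h2
    rcases hcross u v hadj h1 h2 with ⟨rfl, hvD⟩ | ⟨rfl, rfl⟩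
    · rw [rh, rD v hvD]
      have : gD v ∈ N := Finset.mem_of_mem_erase (hgDmem v hvD)
      exact (mem_neighborFinset _ _ _).1 (Finset.mem_inter.1 this).1
    · rw [ra, rb]
      exact hyz
  by_cases h1 : u ∈ B <;> by_cases h2 : v ∈ B
  · exact (G.compl_adj _ _).2 ⟨hne, hind2 _ (memB u h1) _ (memB v h2)⟩
  · exact (key v u hadj.symm h2 h1).symm
  · exact key u v hadj h1 h2
  · exact (G.compl_adj _ _).2 ⟨hne, hind1 _ (memA u h1) _ (memA v h2)⟩

end Embed

lemma aux_claim {V W : Type*} [Fintype V] [Fintype W] [DecidableEq V] [DecidableEq W]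
    (m n : ℕ) (hm : 18 ≤ m) (hn : m ^ 2 - m + 1 ≤ n)
    (U : SimpleGraph V) (hUcard : Fintype.card V = n)
    (t1 t2 : V) (ht : U.Adj t1 t2)
    (T : SimpleGraph V) [DecidableRel T.Adj] (hTdef : T = U.deleteEdges {s(t1, t2)})
    (hTtree : T.IsTree)
    (G : SimpleGraph W) [DecidableRel G.Adj] (hnoU : ¬ Contains Gᶜ U)
    (U1 U2 : Finset W) (hdisj : Disjoint U1 U2)
    (hind1 : ∀ a ∈ U1, ∀ b ∈ U1, ¬ G.Adj a b)
    (hind2 : ∀ a ∈ U2, ∀ b ∈ U2, ¬ G.Adj a b)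
    (hc1 : n - 2 * m + 2 ≤ U1.card) (hc2 : n - 2 * m + 2 ≤ U2.card)
    (hmatching : ∃ y1 ∈ U1, ∃ y2 ∈ U1, ∃ z1 ∈ U2, ∃ z2 ∈ U2,
      y1 ≠ y2 ∧ z1 ≠ z2 ∧ Gᶜ.Adj y1 z1 ∧ Gᶜ.Adj y2 z2) :
    ∀ w ∈ U1, (Gᶜ.neighborFinset w ∩ U2).card ≤ 2 * m - 2 := by
  classical
  intro w hw
  by_contra hbig
  push_neg at hbig
  set N := Gᶜ.neighborFinset w ∩ U2 with hNdef
  have hmn : 17 * m + 1 ≤ n := by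
    have h1 : 18 * m ≤ m * m := Nat.mul_le_mul_right m hm
    have h2 : m ^ 2 = m * m := sq m
    omega
  have hNcard : 2 * m - 1 ≤ N.card := by omega
  -- decomposition of U-adjacency
  have hUT : ∀ u v : V, U.Adj u v → T.Adj u v ∨ (u = t1 ∧ v = t2) ∨ (u = t2 ∧ v = t1) := by
    intro u v huv
    by_cases he : s(u,v) = s(t1,t2)
    · right; rwa [Sym2.eq_iff] at he
    · left
      rw [hTdef]
      simp only [deleteEdges_adj, Set.mem_singleton_iff]
      exact ⟨huv, he⟩
  haveI hVne : Nonempty V := by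
    rw [← Fintype.card_pos_iff, hUcard]; omega
  -- the y-z special edge avoiding w
  obtain ⟨yy, zz, hyyU1, hzzU2, hyyw, hyyzz⟩ :
      ∃ y z, y ∈ U1 ∧ z ∈ U2 ∧ y ≠ w ∧ Gᶜ.Adj y z := by
    obtain ⟨y1, hy1, y2, hy2, z1, hz1, z2, hz2, hy12, hz12, hadj1, hadj2⟩ := hmatching
    by_cases hyw : y1 = w
    · exact ⟨y2, z2, hy2, hz2, fun hc => hy12 (hyw.trans hc.symm), hadj2⟩
    · exact ⟨y1, z1, hy1, hz1, hyw, hadj1⟩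
  rcases tree_dichotomy (T := T) hTtree (2*m - 2) (n - 2*m + 2)
      (by rw [hUcard]; omega) with ⟨u, v, huv, hL, hR⟩ | ⟨h, hsmall⟩
  · -- balanced edge case
    set B0 := side T u v with hB0
    have huB0 : u ∉ B0 := not_hub_mem_side hTtree huv
    have hvB0 : v ∈ B0 := self_mem_side
    have hcards := side_card hTtree huv
    rw [hUcard] at hcards
    have hBe : (side T u v).card = B0.card := rfl
    have hA0 : (Finset.univ \ B0).card ≤ U1.card := by
      rw [Finset.card_univ_diff, hUcard]; omega
    have hB0c : B0.card ≤ U2.card := by omega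
    have hcrossT : ∀ a b : V, T.Adj a b → a ∉ B0 → b ∈ B0 → a = u ∧ b = v := by
      intro a b hab ha hb
      have ha' : a ∈ side T v u := (side_total hTtree huv a).resolve_left ha
      exact side_crossing hTtree huv hab ha' hb
    -- straddle handler
    have straddle : ∀ tA tB : V, tA ∉ B0 → tB ∈ B0 →
        (∀ a b : V, U.Adj a b → T.Adj a b ∨ (a = tA ∧ b = tB) ∨ (a = tB ∧ b = tA)) →
        False := by
      intro tA tB htA htB hUT'
      by_cases h1 : tA = u
      · -- cross t-edge incident to hub u
        apply hnoU
        refine emb0 U G U1 U2 hdisj hind1 hind2 w hw B0 u huB0 {v, tB}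
          (Finset.insert_subset hvB0 (Finset.singleton_subset_iff.2 htB)) hA0 hB0c ?_ ?_
        · rw [← hNdef]
          have h2 : ({v, tB} : Finset V).card ≤ 2 :=
            (Finset.card_insert_le _ _).trans (by simp)
          omega
        · intro a b hab ha hb
          rcases hUT' a b hab with htab | ⟨rfl, rfl⟩ | ⟨rfl, rfl⟩
          · obtain ⟨rfl, rfl⟩ := hcrossT a b htab ha hb
            exact ⟨rfl, Finset.mem_insert_self _ _⟩
          · exact ⟨h1, Finset.mem_insert_of_mem (Finset.mem_singleton_self _)⟩
          · exact absurd htB ha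
      by_cases h2 : tB = v
      · -- flip: hub is v on the other side
        apply hnoU
        have hvB' : v ∉ side T v u := not_hub_mem_side hTtree huv.symm
        have huB' : u ∈ side T v u := self_mem_side
        have htA' : tA ∈ side T v u := (side_total hTtree huv tA).resolve_left htA
        have hcards2 : (side T v u).card + B0.card = n := by omega
        refine emb0 U G U1 U2 hdisj hind1 hind2 w hw (side T v u) v hvB' {u, tA}
          (Finset.insert_subset huB' (Finset.singleton_subset_iff.2 htA')) ?_ ?_ ?_ ?_
        · rw [Finset.card_univ_diff, hUcard]; omega
        · omega
        · rw [← hNdef]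
          have h3 : ({u, tA} : Finset V).card ≤ 2 :=
            (Finset.card_insert_le _ _).trans (by simp)
          omega
        · intro a b hab ha hb
          have ha2 : a ∈ B0 := (side_total hTtree huv a).resolve_right ha
          rcases hUT' a b hab with htab | ⟨rfl, rfl⟩ | ⟨rfl, rfl⟩
          · obtain ⟨rfl, rfl⟩ := side_crossing hTtree huv.symm htab ha2 hb
            exact ⟨rfl, Finset.mem_insert_self _ _⟩
          · exact (ha htA').elim
          · exact ⟨h2, Finset.mem_insert_of_mem (Finset.mem_singleton_self _)⟩
      · -- special edge
        apply hnoU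
        refine embS U G U1 U2 hdisj hind1 hind2 w hw B0 u huB0 {v}
          (Finset.singleton_subset_iff.2 hvB0) tA tB htA h1 htB
          (by simp only [Finset.mem_singleton]; exact h2) yy zz hyyU1 hzzU2 hyyw hyyzz
          hA0 hB0c ?_ ?_
        · rw [← hNdef, Finset.card_singleton]
          have h3 : N.card - 1 ≤ (N.erase zz).card := Finset.pred_card_le_card_erase
          omega
        · intro a b hab ha hb
          rcases hUT' a b hab with htab | ⟨rfl, rfl⟩ | ⟨rfl, rfl⟩
          · obtain ⟨rfl, rfl⟩ := hcrossT a b htab ha hb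
            exact Or.inl ⟨rfl, Finset.mem_singleton_self _⟩
          · exact Or.inr ⟨rfl, rfl⟩
          · exact absurd htB ha
    by_cases m1 : t1 ∈ B0 <;> by_cases m2 : t2 ∈ B0
    · -- both in B0
      apply hnoU
      refine emb0 U G U1 U2 hdisj hind1 hind2 w hw B0 u huB0 {v}
        (Finset.singleton_subset_iff.2 hvB0) hA0 hB0c (by rw [← hNdef, Finset.card_singleton]; omega) ?_
      intro a b hab ha hb
      rcases hUT a b hab with htab | ⟨rfl, rfl⟩ | ⟨rfl, rfl⟩
      · obtain ⟨rfl, rfl⟩ := hcrossT a b htab ha hb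
        exact ⟨rfl, Finset.mem_singleton_self _⟩
      · exact absurd m1 ha
      · exact absurd m2 ha
    · exact straddle t2 t1 m2 m1 (fun a b hab => by
        rcases hUT a b hab with htab | ⟨rfl, rfl⟩ | ⟨rfl, rfl⟩
        · exact Or.inl htab
        · exact Or.inr (Or.inr ⟨rfl, rfl⟩)
        · exact Or.inr (Or.inl ⟨rfl, rfl⟩))
    · exact straddle t1 t2 m1 m2 (fun a b hab => by
        rcases hUT a b hab with htab | ⟨rfl, rfl⟩ | ⟨rfl, rfl⟩
        · exact Or.inl htab
        · exact Or.inr (Or.inl ⟨rfl, rfl⟩)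
        · exact Or.inr (Or.inr ⟨rfl, rfl⟩))
    · -- both outside B0
      apply hnoU
      refine emb0 U G U1 U2 hdisj hind1 hind2 w hw B0 u huB0 {v}
        (Finset.singleton_subset_iff.2 hvB0) hA0 hB0c (by rw [← hNdef, Finset.card_singleton]; omega) ?_
      intro a b hab ha hb
      rcases hUT a b hab with htab | ⟨rfl, rfl⟩ | ⟨rfl, rfl⟩
      · obtain ⟨rfl, rfl⟩ := hcrossT a b htab ha hb
        exact ⟨rfl, Finset.mem_singleton_self _⟩
      · exact absurd hb m2
      · exact absurd hb m1
  · -- hub case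
    have hpart := comp_partition hTtree h
    rw [hUcard] at hpart
    set nbrs := T.neighborFinset h with hnbrs
    have hpos : ∀ x ∈ nbrs, 1 ≤ (side T h x).card :=
      fun x hx => Finset.card_pos.2 ⟨x, self_mem_side⟩
    have hKb : ∀ x ∈ nbrs, (side T h x).card ≤ 2*m - 3 := by
      intro x hx
      have h1 := hsmall x ((T.mem_neighborFinset h x).1 hx)
      omega
    have htot : 2*m - 2 ≤ ∑ x ∈ nbrs, (side T h x).card := by omega
    -- a generic builder given a set of required components
    have main : ∀ X0 : Finset V, X0 ⊆ nbrs →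
        (∑ x ∈ X0, (side T h x).card) ≤ 4*m - 6 → X0.card ≤ 2 →
        ∃ X : Finset V, X0 ⊆ X ∧ X ⊆ nbrs ∧
          2*m - 2 ≤ ∑ x ∈ X, (side T h x).card ∧
          (∑ x ∈ X, (side T h x).card) ≤ 4*m - 6 ∧ X.card ≤ 2*m - 2 := by
      intro X0 hX0 hX0sum hX0card
      obtain ⟨X, h1, h2, h3, h4, h5⟩ := greedy_select (2*m - 2) (2*m - 3)
        (fun x => (side T h x).card) (nbrs \ X0).card nbrs X0 le_rfl hX0 hpos
        (fun i hi _ => hKb i hi) htot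
      refine ⟨X, h1, h2, h3, ?_, ?_⟩
      · have := max_le_iff.1 (le_refl (max (∑ x ∈ X0, (side T h x).card) (2*m - 2 - 1 + (2*m - 3))))
        have h6 := le_max_left (∑ x ∈ X0, (side T h x).card) (2*m - 2 - 1 + (2*m - 3))
        have h7 : max (∑ x ∈ X0, (side T h x).card) (2*m - 2 - 1 + (2*m - 3)) ≤ 4*m - 6 :=
          max_le hX0sum (by omega)
        exact h4.trans h7
      · exact h5.trans (max_le (by omega) le_rfl)
    -- facts about B for any X ⊆ nbrs
    have bfacts : ∀ X : Finset V, X ⊆ nbrs →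
        (X.biUnion (fun x => side T h x)).card = ∑ x ∈ X, (side T h x).card ∧
        h ∉ X.biUnion (fun x => side T h x) ∧
        (∀ x ∈ X, side T h x ⊆ X.biUnion (fun x => side T h x)) ∧
        (∀ a b : V, T.Adj a b → a ∉ X.biUnion (fun x => side T h x) →
          b ∈ X.biUnion (fun x => side T h x) → a = h ∧ b ∈ X) ∧
        (∀ z x, T.Adj h x → z ∈ side T h x →
          (z ∈ X.biUnion (fun x => side T h x) ↔ x ∈ X)) := by
      intro X hXn
      have hadjX : ∀ x ∈ X, T.Adj h x := fun x hx => (T.mem_neighborFinset h x).1 (hXn hx)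
      refine ⟨Finset.card_biUnion (fun x hx y hy hxy =>
          comp_disjoint hTtree (hadjX x hx) (hadjX y hy) hxy), ?_, ?_, ?_, ?_⟩
      · intro hc
        obtain ⟨x, hx, hmem⟩ := Finset.mem_biUnion.1 hc
        exact not_hub_mem_side hTtree (hadjX x hx) hmem
      · exact fun x hx => Finset.subset_biUnion_of_mem _ hx
      · intro a b hab ha hb
        obtain ⟨x, hx, hbx⟩ := Finset.mem_biUnion.1 hb
        have hax : a ∉ side T h x := fun hc => ha (Finset.subset_biUnion_of_mem _ hx hc)
        obtain ⟨rfl, rfl⟩ := cross_comp hTtree hab (hadjX x hx) hbx hax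
        exact ⟨rfl, hx⟩
      · intro z x hadj hzx
        constructor
        · intro hz
          obtain ⟨x', hx', hzx'⟩ := Finset.mem_biUnion.1 hz
          by_cases hxx : x' = x
          · exact hxx ▸ hx'
          · exact ((Finset.disjoint_left.1
              (comp_disjoint hTtree (hadjX x' hx') hadj hxx)) hzx' hzx).elim
        · intro hx
          exact Finset.mem_biUnion.2 ⟨x, hx, hzx⟩
    by_cases c1 : t1 = h
    · -- t1 is the hub
      obtain ⟨X, hX0X, hXn, hXlow, hXhigh, hXcard⟩ := main ∅ (Finset.empty_subset _)
        (by simp) (by simp)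
      obtain ⟨hBcard, hhB, hsubB, hcrossB, hmemiff⟩ := bfacts X hXn
      set B := X.biUnion (fun x => side T h x) with hBdef
      apply hnoU
      classical
      refine emb0 U G U1 U2 hdisj hind1 hind2 w hw B h hhB
        (if t2 ∈ B then insert t2 X else X) ?_ ?_ ?_ ?_ ?_
      · split
        · exact Finset.insert_subset (by assumption) (fun x hx => hsubB x hx self_mem_side)
        · exact fun x hx => hsubB x hx self_mem_side
      · rw [Finset.card_univ_diff, hUcard]; omega
      · omega
      · rw [← hNdef]
        have : (if t2 ∈ B then insert t2 X else X).card ≤ X.card + 1 := by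
          split
          · exact (Finset.card_insert_le _ _)
          · omega
        omega
      · intro a b hab ha hb
        rcases hUT a b hab with htab | ⟨rfl, rfl⟩ | ⟨rfl, rfl⟩
        · obtain ⟨rfl, hbX⟩ := hcrossB a b htab ha hb
          refine ⟨rfl, ?_⟩
          split
          · exact Finset.mem_insert_of_mem hbX
          · exact hbX
        · refine ⟨c1, ?_⟩
          rw [if_pos hb]
          exact Finset.mem_insert_self _ _
        · exact absurd hb (c1 ▸ hhB)
    · by_cases c2 : t2 = h
      · -- t2 is the hub
        obtain ⟨X, hX0X, hXn, hXlow, hXhigh, hXcard⟩ := main ∅ (Finset.empty_subset _)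
          (by simp) (by simp)
        obtain ⟨hBcard, hhB, hsubB, hcrossB, hmemiff⟩ := bfacts X hXn
        set B := X.biUnion (fun x => side T h x) with hBdef
        apply hnoU
        refine emb0 U G U1 U2 hdisj hind1 hind2 w hw B h hhB
          (if t1 ∈ B then insert t1 X else X) ?_ ?_ ?_ ?_ ?_
        · split
          · exact Finset.insert_subset (by assumption) (fun x hx => hsubB x hx self_mem_side)
          · exact fun x hx => hsubB x hx self_mem_side
        · rw [Finset.card_univ_diff, hUcard]; omega
        · omega
        · rw [← hNdef]
          have : (if t1 ∈ B then insert t1 X else X).card ≤ X.card + 1 := by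
            split
            · exact (Finset.card_insert_le _ _)
            · omega
          omega
        · intro a b hab ha hb
          rcases hUT a b hab with htab | ⟨rfl, rfl⟩ | ⟨rfl, rfl⟩
          · obtain ⟨rfl, hbX⟩ := hcrossB a b htab ha hb
            refine ⟨rfl, ?_⟩
            split
            · exact Finset.mem_insert_of_mem hbX
            · exact hbX
          · exact absurd hb (c2 ▸ hhB)
          · refine ⟨c2, ?_⟩
            rw [if_pos hb]
            exact Finset.mem_insert_self _ _
      · -- neither t is the hub
        obtain ⟨x1, hx1adj, ht1x1⟩ := (comp_total hTtree h t1).resolve_left c1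
        obtain ⟨x2, hx2adj, ht2x2⟩ := (comp_total hTtree h t2).resolve_left c2
        have hx1n : x1 ∈ nbrs := (T.mem_neighborFinset h x1).2 hx1adj
        have hx2n : x2 ∈ nbrs := (T.mem_neighborFinset h x2).2 hx2adj
        set X0 : Finset V := if x1 = x2 then ∅ else {x1, x2} with hX0def
        have hX0n : X0 ⊆ nbrs := by
          rw [hX0def]
          split
          · exact Finset.empty_subset _
          · exact Finset.insert_subset hx1n (Finset.singleton_subset_iff.2 hx2n)
        have hX0sum : (∑ x ∈ X0, (side T h x).card) ≤ 4*m - 6 := by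
          rw [hX0def]
          split
          · simp only [Finset.sum_empty]; omega
          · rw [Finset.sum_pair (by assumption)]
            have := hKb x1 hx1n
            have := hKb x2 hx2n
            omega
        have hX0card : X0.card ≤ 2 := by
          rw [hX0def]
          split
          · simp
          · exact (Finset.card_insert_le _ _).trans (by simp)
        obtain ⟨X, hX0X, hXn, hXlow, hXhigh, hXcard⟩ := main X0 hX0n hX0sum hX0card
        obtain ⟨hBcard, hhB, hsubB, hcrossB, hmemiff⟩ := bfacts X hXn
        set B := X.biUnion (fun x => side T h x) with hBdef
        have hiff : (x1 ∈ X ↔ x2 ∈ X) := by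
          by_cases hxx : x1 = x2
          · rw [hxx]
          · have h1 : x1 ∈ X := hX0X (by rw [hX0def, if_neg hxx]; exact Finset.mem_insert_self _ _)
            have h2 : x2 ∈ X := hX0X (by rw [hX0def, if_neg hxx]; exact Finset.mem_insert_of_mem (Finset.mem_singleton_self _))
            simp [h1, h2]
        apply hnoU
        refine emb0 U G U1 U2 hdisj hind1 hind2 w hw B h hhB X
          (fun x hx => hsubB x hx self_mem_side) ?_ ?_ ?_ ?_
        · rw [Finset.card_univ_diff, hUcard]; omega
        · omega
        · rw [← hNdef]; omega
        · intro a b hab ha hb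
          rcases hUT a b hab with htab | ⟨rfl, rfl⟩ | ⟨rfl, rfl⟩
          · exact hcrossB a b htab ha hb
          · exfalso
            have h2X : x2 ∈ X := (hmemiff b x2 hx2adj ht2x2).1 hb
            have h1X : x1 ∈ X := hiff.2 h2X
            exact ha ((hmemiff a x1 hx1adj ht1x1).2 h1X)
          · exfalso
            have h1X : x1 ∈ X := (hmemiff b x1 hx1adj ht1x1).1 hb
            have h2X : x2 ∈ X := hiff.1 h1X
            exact ha ((hmemiff a x2 hx2adj ht2x2).2 h2X)


/-- **Claim 4.6**: with `U` unicyclic (not a cycle), `t₁t₂` an edge of its unique cycle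
(i.e. an edge whose deletion leaves a tree `T`) with `t₁` not a leaf of `T`, `Ḡ` containing
no `U`, `U₁, U₂` disjoint independent sets of `G` of size at least `n - 2m + 2`, and two
disjoint `Ḡ`-edges between `U₁` and `U₂`: every vertex of `U₁` has at most `2m - 2`
`Ḡ`-neighbors in `U₂` and vice versa. -/
theorem unicyclic_few_complement_neighbors_between
    {V W : Type*} [Fintype V] [Fintype W] [DecidableEq V] [DecidableEq W]
    (m n : ℕ) (hm : 18 ≤ m) (hn : m ^ 2 - m + 1 ≤ n)
    (U : SimpleGraph V) (hUconn : U.Connected) (hUcard : Fintype.card V = n)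
    (hUedges : U.edgeSet.ncard = n)
    (hnotcycle : ¬ Nonempty (U ≃g SimpleGraph.cycleGraph n))
    (t1 t2 : V) (ht : U.Adj t1 t2)
    (T : SimpleGraph V) [DecidableRel T.Adj] (hTdef : T = U.deleteEdges {s(t1, t2)})
    (hTtree : T.IsTree) (ht1 : T.degree t1 ≠ 1)
    (G : SimpleGraph W) [DecidableRel G.Adj] (hnoU : ¬ Contains Gᶜ U)
    (U1 U2 : Finset W) (hdisj : Disjoint U1 U2)
    (hind1 : ∀ a ∈ U1, ∀ b ∈ U1, ¬ G.Adj a b)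
    (hind2 : ∀ a ∈ U2, ∀ b ∈ U2, ¬ G.Adj a b)
    (hc1 : n - 2 * m + 2 ≤ U1.card) (hc2 : n - 2 * m + 2 ≤ U2.card)
    (hmatching : ∃ y1 ∈ U1, ∃ y2 ∈ U1, ∃ z1 ∈ U2, ∃ z2 ∈ U2,
      y1 ≠ y2 ∧ z1 ≠ z2 ∧ Gᶜ.Adj y1 z1 ∧ Gᶜ.Adj y2 z2) :
    (∀ w ∈ U1, (Gᶜ.neighborFinset w ∩ U2).card ≤ 2 * m - 2) ∧
      (∀ w ∈ U2, (Gᶜ.neighborFinset w ∩ U1).card ≤ 2 * m - 2) := by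
  obtain ⟨y1, hy1, y2, hy2, z1, hz1, z2, hz2, hy12, hz12, hadj1, hadj2⟩ := hmatching
  constructor
  · exact aux_claim m n hm hn U hUcard t1 t2 ht T hTdef hTtree G hnoU U1 U2 hdisj
      hind1 hind2 hc1 hc2 ⟨y1, hy1, y2, hy2, z1, hz1, z2, hz2, hy12, hz12, hadj1, hadj2⟩
  · exact aux_claim m n hm hn U hUcard t1 t2 ht T hTdef hTtree G hnoU U2 U1 hdisj.symm
      hind2 hind1 hc2 hc1 ⟨z1, hz1, z2, hz2, y1, hy1, y2, hy2, hz12, hy12, hadj1.symm, hadj2.symm⟩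
end

section
/- Let m ≥ 18 and n ≥ m² − m + 1. Let U be a connected graph with n vertices and exactly n edges that is not a cycle, and let t_1t_2 be an edge of the unique cycle of U such that t_1 is not a leaf of the tree T = U − t_1t_2 and such that the maximum degree of T satisfies Δ(T) < 5n/9. Let G be a graph whose complement Ḡ does not contain U as a subgraph, and suppose U_1 and U_2 are disjoint independent sets of G, each of size at least n − 2m + 2, such that there is at least one edge of Ḡ between U_1 and U_2. Then every vertex w ∈ V(G) ∖ (U_1 ∪ U_2) satisfies either d̄_{U_1}(w) < 1 + 5n/18 or d̄_{U_2}(w) < 1 + 5n/18, where d̄_{U_i}(w) is the number of neighbors of w in U_i in Ḡ. -/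
open Finset

set_option linter.unusedSectionVars false
set_option maxHeartbeats 1000000

namespace Claim47

variable {V : Type*} [Fintype V] [DecidableEq V] {T : SimpleGraph V} [DecidableRel T.Adj]

/-- `x` and `y` are joined by a walk in `T` avoiding `v`. -/
def Avoid (T : SimpleGraph V) (v x y : V) : Prop := ∃ p : T.Walk x y, v ∉ p.support

lemma Avoid.symm {v x y : V} (h : Avoid T v x y) : Avoid T v y x := by
  obtain ⟨p, hp⟩ := h
  exact ⟨p.reverse, by simpa [SimpleGraph.Walk.support_reverse] using hp⟩

lemma Avoid.trans {v x y z : V} (h : Avoid T v x y) (h' : Avoid T v y z) : Avoid T v x z := by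
  obtain ⟨p, hp⟩ := h; obtain ⟨q, hq⟩ := h'
  refine ⟨p.append q, ?_⟩
  rw [SimpleGraph.Walk.mem_support_append_iff]
  tauto

lemma Avoid.ne_left {v x y : V} (h : Avoid T v x y) : x ≠ v := by
  obtain ⟨p, hp⟩ := h
  intro hx; exact hp (hx ▸ p.start_mem_support)

lemma Avoid.ne_right {v x y : V} (h : Avoid T v x y) : y ≠ v := h.symm.ne_left

lemma avoid_refl {v x : V} (h : x ≠ v) : Avoid T v x x :=
  ⟨SimpleGraph.Walk.nil, by simp [Ne.symm h]⟩

lemma avoid_of_adj {v x y : V} (h : T.Adj x y) (hx : x ≠ v) (hy : y ≠ v) : Avoid T v x y :=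
  ⟨h.toWalk, by simp [Ne.symm hx, Ne.symm hy]⟩

/-- If `v` lies on a path from `x` to `u` (and `v ≠ u`), then there is a walk from `x`
to `v` avoiding `u`. -/
lemma avoid_split {x u v : V} (p : T.Walk x u) (hp : p.IsPath) (hv : v ∈ p.support)
    (hvu : v ≠ u) : Avoid T u x v := by
  refine ⟨p.takeUntil v hv, fun hu => ?_⟩
  have hs := hp.support_nodup
  rw [← p.take_spec hv, SimpleGraph.Walk.support_append] at hs
  have h2 : u ∈ (p.dropUntil v hv).support.tail := by
    have h3 : u ∈ (p.dropUntil v hv).support := SimpleGraph.Walk.end_mem_support _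
    rw [SimpleGraph.Walk.support_eq_cons] at h3
    rcases List.mem_cons.mp h3 with h3 | h3
    · exact absurd h3.symm hvu
    · exact h3
  exact (List.disjoint_of_nodup_append hs) hu h2

/-- Distinct neighbours of `v` cannot be joined avoiding `v`, in a tree. -/
lemma not_avoid_of_adj (hT : T.IsAcyclic) {v r r' : V} (h1 : T.Adj v r) (h2 : T.Adj v r')
    (hne : r ≠ r') : ¬ Avoid T v r r' := by
  rintro ⟨p0, hp0⟩
  have hpv : v ∉ p0.toPath.1.support := fun h => hp0 (p0.support_toPath_subset h)
  have hq : (SimpleGraph.Walk.cons h1.symm (SimpleGraph.Walk.cons h2 SimpleGraph.Walk.nil) :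
      T.Walk r r').IsPath := by
    simp [SimpleGraph.Walk.isPath_def, h1.ne', hne, h2.ne]
  have := (SimpleGraph.isAcyclic_iff_path_unique.mp hT) p0.toPath ⟨_, hq⟩
  rw [this] at hpv
  simp at hpv

open Classical in
/-- The component of `T - v` containing (intended: a neighbour) `r`, as a `Finset`. -/
noncomputable def comp (T : SimpleGraph V) (v r : V) : Finset V :=
  @Finset.filter _ (fun x => Avoid T v x r) (Classical.decPred _) Finset.univ

lemma mem_comp {v r x : V} : x ∈ comp T v r ↔ Avoid T v x r := by
  simp [comp]

lemma ne_of_mem_comp {v r x : V} (h : x ∈ comp T v r) : x ≠ v := (mem_comp.mp h).ne_left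

lemma self_mem_comp {v r : V} (h : r ≠ v) : r ∈ comp T v r := mem_comp.mpr (avoid_refl h)

lemma comp_disjoint (hT : T.IsAcyclic) {v r r' : V} (h1 : T.Adj v r) (h2 : T.Adj v r')
    (hne : r ≠ r') : Disjoint (comp T v r) (comp T v r') := by
  rw [Finset.disjoint_left]
  intro x hx hx'
  exact not_avoid_of_adj hT h1 h2 hne ((mem_comp.mp hx).symm.trans (mem_comp.mp hx'))

lemma comp_closed {v r x y : V} (h : T.Adj x y) (hy : y ≠ v) (hx : x ∈ comp T v r) :
    y ∈ comp T v r :=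
  mem_comp.mpr ((avoid_of_adj h.symm hy (ne_of_mem_comp hx)).trans (mem_comp.mp hx))

lemma eq_root_of_adj (hT : T.IsAcyclic) {v r x : V} (h1 : T.Adj v r) (hx : x ∈ comp T v r)
    (h2 : T.Adj v x) : x = r := by
  by_contra hne
  exact (Finset.disjoint_left.mp (comp_disjoint hT h2 h1 hne)) (self_mem_comp h2.ne') hx

lemma exists_adj_avoid (hconn : T.Connected) {v x : V} (h : x ≠ v) :
    ∃ r, T.Adj v r ∧ x ∈ comp T v r := by
  obtain ⟨p0⟩ := hconn v x
  obtain ⟨p, hp⟩ : ∃ p : T.Walk v x, p.IsPath := ⟨p0.toPath.1, p0.toPath.2⟩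
  cases p with
  | nil => exact absurd rfl h.symm
  | cons hadj q =>
    refine ⟨_, hadj, mem_comp.mpr (Avoid.symm ⟨q, ?_⟩)⟩
    have := hp.support_nodup
    rw [SimpleGraph.Walk.support_cons] at this
    exact (List.nodup_cons.mp this).1

lemma comp_biUnion (hT : T.IsTree) (v : V) :
    (T.neighborFinset v).biUnion (comp T v) = Finset.univ.erase v := by
  ext x
  simp only [Finset.mem_biUnion, Finset.mem_erase, Finset.mem_univ, and_true,
    SimpleGraph.mem_neighborFinset]
  constructor
  · rintro ⟨r, _, hx⟩; exact ne_of_mem_comp hx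
  · intro hx; exact exists_adj_avoid hT.isConnected hx

lemma comp_sum_card (hT : T.IsTree) (v : V) :
    ∑ r ∈ T.neighborFinset v, (comp T v r).card = Fintype.card V - 1 := by
  have hdisj : ∀ r ∈ T.neighborFinset v, ∀ r' ∈ T.neighborFinset v, r ≠ r' →
      Disjoint (comp T v r) (comp T v r') := fun r hr r' hr' hne =>
    comp_disjoint hT.IsAcyclic (by simpa using hr) (by simpa using hr') hne
  rw [← Finset.card_biUnion hdisj, comp_biUnion hT v,
    Finset.card_erase_of_mem (Finset.mem_univ v), Finset.card_univ]

/-- Penultimate-vertex extraction: from a walk `x → v` avoiding `u` (with `x ≠ v`),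
get a neighbour `y` of `v` with `y ≠ u` and `x ∈ comp T v y`. -/
lemma avoid_penultimate {u v x : V} (h : Avoid T u x v) (hxv : x ≠ v) :
    ∃ y, T.Adj v y ∧ y ≠ u ∧ x ∈ comp T v y := by
  obtain ⟨p0, hp0⟩ := h
  have hpu : u ∉ p0.toPath.1.support := fun hmem => hp0 (p0.support_toPath_subset hmem)
  obtain ⟨p, hp, hup⟩ : ∃ p : T.Walk v x, p.IsPath ∧ u ∉ p.support :=
    ⟨p0.toPath.1.reverse, p0.toPath.2.reverse, by
      rw [SimpleGraph.Walk.support_reverse, List.mem_reverse]; exact hpu⟩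
  cases p with
  | nil => exact absurd rfl hxv.symm
  | cons hadj q =>
    rename_i y
    have hnd := hp.support_nodup
    rw [SimpleGraph.Walk.support_cons] at hnd
    have hvq : v ∉ q.support := (List.nodup_cons.mp hnd).1
    rw [SimpleGraph.Walk.support_cons] at hup
    refine ⟨y, hadj, fun hyu => hup ?_, mem_comp.mpr (Avoid.symm ⟨q, hvq⟩)⟩
    exact List.mem_cons_of_mem _ (hyu ▸ q.start_mem_support)

/-- Shift lemma, part 1: components of `T - u` away from `v` sit inside `comp T v u`. -/
lemma comp_shift_subset (hT : T.IsTree) {v u : V} (hadj : T.Adj v u) {r : V}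
    (hr : T.Adj u r) (hrv : r ≠ v) : comp T u r ⊆ (comp T v u).erase u := by
  have hvnot : v ∉ comp T u r := fun hv =>
    not_avoid_of_adj hT.IsAcyclic hr hadj.symm hrv (mem_comp.mp hv).symm
  intro x hx
  rw [Finset.mem_erase]
  refine ⟨ne_of_mem_comp hx, mem_comp.mpr ?_⟩
  have hxv : x ≠ v := fun hxv => hvnot (hxv ▸ hx)
  -- take a path from x to u; show it avoids v
  obtain ⟨p0⟩ := hT.isConnected x u
  set p := p0.toPath.1 with hpdef
  have hp : p.IsPath := p0.toPath.2
  by_cases hvmem : v ∈ p.support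
  · exfalso
    have h1 : Avoid T u x v := avoid_split p hp hvmem hadj.ne
    exact hvnot (mem_comp.mpr (h1.symm.trans (mem_comp.mp hx)))
  · exact ⟨p, hvmem⟩

/-- Shift lemma, part 2: `comp T u v` is disjoint from `comp T v u`. -/
lemma comp_shift_disjoint (hT : T.IsTree) {v u : V} (hadj : T.Adj v u) :
    Disjoint (comp T u v) (comp T v u) := by
  rw [Finset.disjoint_left]
  intro x hx hx'
  have h1 : Avoid T u x v := mem_comp.mp hx
  have hxv : x ≠ v := ne_of_mem_comp hx'
  obtain ⟨y, hyv, hyu, hxy⟩ := avoid_penultimate (T := T) h1 hxv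
  exact (Finset.disjoint_left.mp (comp_disjoint hT.IsAcyclic hyv hadj hyu)) hxy hx'

/-- The max component size of `T - v`. -/
noncomputable def maxComp (T : SimpleGraph V) [DecidableRel T.Adj] (v : V) : ℕ :=
  (T.neighborFinset v).sup fun r => (comp T v r).card

lemma card_comp_le_maxComp {v r : V} (h : T.Adj v r) : (comp T v r).card ≤ maxComp T v :=
  Finset.le_sup (f := fun r => (comp T v r).card) (by simpa using h)

/-- Existence of a centroid: all components of `T - c` have size at most `n/2`. -/
lemma exists_centroid (hT : T.IsTree) [Nonempty V] :
    ∃ c : V, ∀ r, T.Adj c r → 2 * (comp T c r).card ≤ Fintype.card V := by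
  obtain ⟨c, -, hc⟩ := Finset.exists_min_image Finset.univ (maxComp T) ⟨Classical.arbitrary V, Finset.mem_univ _⟩
  refine ⟨c, fun u hu => ?_⟩
  by_contra hbig
  push_neg at hbig
  set S := comp T c u with hS
  have hcard : Fintype.card V < 2 * S.card := hbig
  have huS : u ∈ S := self_mem_comp hu.ne'
  have hmaxu : maxComp T u < S.card := by
    have hpos : (⊥ : ℕ) < S.card := Finset.card_pos.mpr ⟨u, huS⟩
    rw [maxComp, Finset.sup_lt_iff hpos]
    intro r hr
    rw [SimpleGraph.mem_neighborFinset] at hr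
    by_cases hrc : r = c
    · rw [hrc]
      have hsub : comp T u c ⊆ Finset.univ \ S := by
        intro x hx
        rw [Finset.mem_sdiff]
        exact ⟨Finset.mem_univ _,
          fun hxS => (Finset.disjoint_left.mp (comp_shift_disjoint hT hu)) hx hxS⟩
      calc (comp T u c).card ≤ (Finset.univ \ S).card := Finset.card_le_card hsub
        _ = Fintype.card V - S.card := by rw [Finset.card_sdiff_of_subset (Finset.subset_univ _), Finset.card_univ]
        _ < S.card := by omega
    · calc (comp T u r).card ≤ ((comp T c u).erase u).card :=
            Finset.card_le_card (comp_shift_subset hT hu hr hrc)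
        _ = S.card - 1 := by rw [Finset.card_erase_of_mem huS]
        _ < S.card := by
            have : 0 < S.card := Finset.card_pos.mpr ⟨u, huS⟩
            omega
  have h1 : maxComp T c ≤ maxComp T u := hc u (Finset.mem_univ u)
  have h2 : S.card ≤ maxComp T c := card_comp_le_maxComp hu
  omega

/-- The key packing lemma: items of size ≤ capA, total ≤ n-1, at most k < 5n/9 many,
can be split into two groups respecting size caps (≥ n-2m+2) and count caps (< Dᵢ). -/
lemma packing {ι : Type*} [DecidableEq ι] (A : Finset ι) (s : ι → ℕ)
    (n m capA capB D1 D2 k : ℕ) (hm : 18 ≤ m) (hn : 17 * m + 1 ≤ n)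
    (hs1 : ∀ i ∈ A, 1 ≤ s i) (hsA : ∀ i ∈ A, s i ≤ capA)
    (hsum : ∑ i ∈ A, s i ≤ n - 1) (hk : A.card ≤ k) (hΔ : 9 * k < 5 * n)
    (hcapA : n - 2 * m + 2 ≤ capA) (hcapB : n - 2 * m + 2 ≤ capB)
    (hD1 : 18 + 5 * n ≤ 18 * D1) (hD2 : 18 + 5 * n ≤ 18 * D2) :
    ∃ I ⊆ A, (∑ i ∈ I, s i ≤ capA) ∧ I.card + 1 ≤ D1 ∧
      (∑ i ∈ A \ I, s i ≤ capB) ∧ (A \ I).card + 1 ≤ D2 := by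
  classical
  set F := A.powerset.filter (fun I => ∑ i ∈ I, s i ≤ capA ∧ I.card + 1 ≤ D1) with hF
  have hne : (∅ : Finset ι) ∈ F := by
    rw [hF, Finset.mem_filter, Finset.mem_powerset]
    refine ⟨Finset.empty_subset _, by simp, by simp; omega⟩
  obtain ⟨I, hIF, hImax⟩ := F.exists_max_image (fun I => ∑ i ∈ I, s i) ⟨∅, hne⟩
  rw [hF, Finset.mem_filter, Finset.mem_powerset] at hIF
  obtain ⟨hIA, hIcap, hIcnt⟩ := hIF
  have hsplit : ∑ i ∈ A \ I, s i + ∑ i ∈ I, s i = ∑ i ∈ A, s i := Finset.sum_sdiff hIA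
  have hcle : (A \ I).card + I.card = A.card := Finset.card_sdiff_add_card_eq_card hIA
  have hI1 : I.card ≤ ∑ i ∈ I, s i := by
    simpa using Finset.card_nsmul_le_sum I s 1 (fun i hi => hs1 i (hIA hi))
  have hrest1 : (A \ I).card ≤ ∑ i ∈ A \ I, s i := by
    simpa using Finset.card_nsmul_le_sum (A \ I) s 1
      (fun i hi => hs1 i ((Finset.sdiff_subset) hi))
  by_cases hcnt : D1 ≤ I.card + 1
  · exact ⟨I, hIA, hIcap, hIcnt, by omega, by omega⟩
  · push_neg at hcnt
    by_cases hJe : A \ I = ∅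
    · refine ⟨I, hIA, hIcap, hIcnt, ?_, ?_⟩ <;> rw [hJe] <;> simp <;> omega
    · obtain ⟨j0, hj0⟩ := Finset.nonempty_iff_ne_empty.mpr hJe
      rw [Finset.mem_sdiff] at hj0
      have hins : ¬ (s j0 + ∑ i ∈ I, s i ≤ capA) := by
        intro hc
        have hiF : insert j0 I ∈ F := by
          rw [hF, Finset.mem_filter, Finset.mem_powerset]
          refine ⟨Finset.insert_subset hj0.1 hIA, ?_, ?_⟩
          · rw [Finset.sum_insert hj0.2]; exact hc
          · rw [Finset.card_insert_of_notMem hj0.2]; omega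
        have h1 := hImax _ hiF
        rw [Finset.sum_insert hj0.2] at h1
        have := hs1 j0 hj0.1
        omega
      push_neg at hins
      have hsingle : ({j0} : Finset ι) ∈ F := by
        rw [hF, Finset.mem_filter, Finset.mem_powerset]
        refine ⟨Finset.singleton_subset_iff.mpr hj0.1, by simpa using hsA j0 hj0.1, by simp; omega⟩
      have hmax2 : s j0 ≤ ∑ i ∈ I, s i := by simpa using hImax _ hsingle
      have h5 : (A \ I).card + s j0 ≤ ∑ i ∈ A \ I, s i + 1 := by
        have hj0' : j0 ∈ A \ I := Finset.mem_sdiff.mpr hj0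
        have he : ∑ i ∈ A \ I, s i = s j0 + ∑ i ∈ (A \ I).erase j0, s i :=
          (Finset.add_sum_erase _ s hj0').symm
        have hc : ((A \ I).erase j0).card ≤ ∑ i ∈ (A \ I).erase j0, s i := by
          simpa using Finset.card_nsmul_le_sum ((A \ I).erase j0) s 1
            (fun i hi => hs1 i (Finset.sdiff_subset (Finset.erase_subset _ _ hi)))
        have : ((A \ I).erase j0).card = (A \ I).card - 1 :=
          Finset.card_erase_of_mem hj0'
        have hpos : 1 ≤ (A \ I).card := Finset.card_pos.mpr ⟨j0, hj0'⟩
        omega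
      exact ⟨I, hIA, hIcap, by omega, by omega, by omega⟩

/-- Existence of an injection sending a finset into a target with a prescribed subset
landing in a prescribed subtarget. -/
lemma exists_injOn {V W : Type*} [DecidableEq V] [DecidableEq W] [Nonempty W]
    (X P : Finset V) (TU N : Finset W)
    (hPX : P ⊆ X) (hNT : N ⊆ TU) (hXT : X.card ≤ TU.card) (hPN : P.card ≤ N.card) :
    ∃ f : V → W, Set.InjOn f ↑X ∧ (∀ x ∈ X, f x ∈ TU) ∧ (∀ x ∈ P, f x ∈ N) := by
  classical
  obtain ⟨N', hN'N, hN'card⟩ := Finset.exists_subset_card_eq hPN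
  have e1 : (P : Type _) ≃ (N' : Type _) := by
    apply Fintype.equivOfCardEq
    simp [hN'card]
  have hcard2 : (X \ P).card ≤ (TU \ N').card := by
    rw [Finset.card_sdiff_of_subset hPX, Finset.card_sdiff_of_subset (hN'N.trans hNT)]
    omega
  obtain ⟨T', hT'sub, hT'card⟩ := Finset.exists_subset_card_eq hcard2
  have e2 : ((X \ P : Finset V) : Type _) ≃ (T' : Type _) := by
    apply Fintype.equivOfCardEq
    simp [hT'card]
  refine ⟨fun x => if h : x ∈ P then (e1 ⟨x, h⟩ : W) else
    (if h2 : x ∈ X \ P then (e2 ⟨x, h2⟩ : W) else Classical.arbitrary W), ?_, ?_, ?_⟩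
  · intro a ha b hb hab
    simp only at hab
    by_cases haP : a ∈ P <;> by_cases hbP : b ∈ P
    · rw [dif_pos haP, dif_pos hbP] at hab
      have h9 := e1.injective (Subtype.ext hab)
      exact congrArg Subtype.val h9
    · have haX : b ∈ X \ P := Finset.mem_sdiff.mpr ⟨hb, hbP⟩
      rw [dif_pos haP, dif_neg hbP, dif_pos haX] at hab
      exfalso
      have h1 : (e1 ⟨a, haP⟩ : W) ∈ N' := (e1 ⟨a, haP⟩).2
      have h2 : (e2 ⟨b, haX⟩ : W) ∈ TU \ N' := hT'sub (e2 ⟨b, haX⟩).2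
      rw [hab] at h1
      exact (Finset.mem_sdiff.mp h2).2 h1
    · have haX : a ∈ X \ P := Finset.mem_sdiff.mpr ⟨ha, haP⟩
      rw [dif_neg haP, dif_pos hbP, dif_pos haX] at hab
      exfalso
      have h1 : (e1 ⟨b, hbP⟩ : W) ∈ N' := (e1 ⟨b, hbP⟩).2
      have h2 : (e2 ⟨a, haX⟩ : W) ∈ TU \ N' := hT'sub (e2 ⟨a, haX⟩).2
      rw [← hab] at h1
      exact (Finset.mem_sdiff.mp h2).2 h1
    · have haX : a ∈ X \ P := Finset.mem_sdiff.mpr ⟨ha, haP⟩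
      have hbX : b ∈ X \ P := Finset.mem_sdiff.mpr ⟨hb, hbP⟩
      rw [dif_neg haP, dif_pos haX, dif_neg hbP, dif_pos hbX] at hab
      have h9 := e2.injective (Subtype.ext hab)
      exact congrArg Subtype.val h9
  · intro x hx
    by_cases hxP : x ∈ P
    · simp only [dif_pos hxP]
      exact hNT (hN'N (e1 ⟨x, hxP⟩).2)
    · have hxX : x ∈ X \ P := Finset.mem_sdiff.mpr ⟨hx, hxP⟩
      simp only [dif_neg hxP, dif_pos hxX]
      exact (Finset.mem_sdiff.mp (hT'sub (e2 ⟨x, hxX⟩).2)).1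
  · intro x hx
    simp only [dif_pos hx]
    exact hN'N (e1 ⟨x, hx⟩).2

section Assemble
variable {W : Type*} [Fintype W] [DecidableEq W]

/-- Generic assembly: a partition `{v} ∪ X ∪ Y` of the vertices of `U` together with
suitable injections into `U1`, `U2` and the vertex `w` yields a copy of `U` in `Gᶜ`. -/
lemma assemble (U : SimpleGraph V) (t1 t2 : V)
    (hTdef : T = U.deleteEdges {s(t1, t2)})
    (G : SimpleGraph W)
    (U1 U2 : Finset W) (hdisj : Disjoint U1 U2)
    (hind1 : ∀ a ∈ U1, ∀ b ∈ U1, ¬ G.Adj a b)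
    (hind2 : ∀ a ∈ U2, ∀ b ∈ U2, ¬ G.Adj a b)
    (w : W) (hw1 : w ∉ U1) (hw2 : w ∉ U2)
    (v : V) (X Y : Finset V) (hXY : Disjoint X Y)
    (hcover : ∀ x : V, x = v ∨ x ∈ X ∨ x ∈ Y)
    (hclosed : ∀ a ∈ X, ∀ b ∈ Y, ¬ T.Adj a b)
    (f : V → W) (hfv : f v = w)
    (hfX : ∀ x ∈ X, f x ∈ U1) (hfY : ∀ x ∈ Y, f x ∈ U2)
    (hinjX : Set.InjOn f ↑X) (hinjY : Set.InjOn f ↑Y)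
    (hroots : ∀ b, T.Adj v b → Gᶜ.Adj w (f b))
    (ht12 : Gᶜ.Adj (f t1) (f t2)) :
    Contains Gᶜ U := by
  have hXU2 : ∀ x ∈ X, f x ∉ U2 := fun x hx h2 =>
    (Finset.disjoint_left.mp hdisj) (hfX x hx) h2
  have hXw : ∀ x ∈ X, f x ≠ w := fun x hx he => hw1 (he ▸ hfX x hx)
  have hYw : ∀ x ∈ Y, f x ≠ w := fun x hx he => hw2 (he ▸ hfY x hx)
  refine ⟨f, ?_, ?_⟩
  · intro a b hab
    rcases hcover a with ha | ha | ha <;> rcases hcover b with hb | hb | hb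
    · rw [ha, hb]
    · subst ha; exact absurd (hfv ▸ hab.symm) (hXw b hb)
    · subst ha; exact absurd (hfv ▸ hab.symm) (hYw b hb)
    · subst hb; exact absurd (hfv ▸ hab) (hXw a ha)
    · exact hinjX ha hb hab
    · exact absurd (hab ▸ hfX a ha) (fun h2 => (Finset.disjoint_left.mp hdisj) h2 (hfY b hb))
    · subst hb; exact absurd (hfv ▸ hab) (hYw a ha)
    · exact absurd (hab ▸ hfY a ha) (fun h2 => (Finset.disjoint_left.mp hdisj) (hfX b hb) h2)
    · exact hinjY ha hb hab
  · intro a b hUab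
    have hsplit : T.Adj a b ∨ (a = t1 ∧ b = t2) ∨ (a = t2 ∧ b = t1) := by
      by_cases hs : s(a, b) = s(t1, t2)
      · right
        rcases Sym2.eq_iff.mp hs with ⟨h1, h2⟩ | ⟨h1, h2⟩
        · exact Or.inl ⟨h1, h2⟩
        · exact Or.inr ⟨h1, h2⟩
      · left
        rw [hTdef]
        exact SimpleGraph.deleteEdges_adj.mpr ⟨hUab, by simpa using hs⟩
    rcases hsplit with hT | ⟨h1, h2⟩ | ⟨h1, h2⟩
    · rcases hcover a with ha | ha | ha <;> rcases hcover b with hb | hb | hb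
      · exact absurd (ha ▸ hb ▸ hT).ne (fun h => h rfl)
      · rw [ha, hfv]; exact hroots b (ha ▸ hT)
      · rw [ha, hfv]; exact hroots b (ha ▸ hT)
      · rw [hb, hfv]; exact (hroots a (hb ▸ hT.symm)).symm
      · refine (SimpleGraph.compl_adj _ _ _).mpr ⟨fun he => hT.ne (hinjX ha hb he), ?_⟩
        exact hind1 _ (hfX a ha) _ (hfX b hb)
      · exact absurd hT (hclosed a ha b hb)
      · rw [hb, hfv]; exact (hroots a (hb ▸ hT.symm)).symm
      · exact absurd hT.symm (hclosed b hb a ha)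
      · refine (SimpleGraph.compl_adj _ _ _).mpr ⟨fun he => hT.ne (hinjY ha hb he), ?_⟩
        exact hind2 _ (hfY a ha) _ (hfY b hb)
    · rw [h1, h2]; exact ht12
    · rw [h1, h2]; exact ht12.symm

end Assemble

lemma exists_injOn_pin {V W : Type*} [DecidableEq V] [DecidableEq W] [Nonempty W]
    (X P : Finset V) (TU N : Finset W) (t : V) (y : W)
    (hPX : P ⊆ X) (hNT : N ⊆ TU) (htX : t ∈ X) (htP : t ∉ P) (hy : y ∈ TU)
    (hXT : X.card ≤ TU.card) (hPN : P.card + 1 ≤ N.card) :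
    ∃ f : V → W, Set.InjOn f ↑X ∧ (∀ x ∈ X, f x ∈ TU) ∧ (∀ x ∈ P, f x ∈ N) ∧ f t = y := by
  classical
  have hPX' : P ⊆ X.erase t := fun x hx =>
    Finset.mem_erase.mpr ⟨fun he => htP (he ▸ hx), hPX hx⟩
  have hNT' : N.erase y ⊆ TU.erase y := Finset.erase_subset_erase _ hNT
  have hXT' : (X.erase t).card ≤ (TU.erase y).card := by
    rw [Finset.card_erase_of_mem htX, Finset.card_erase_of_mem hy]
    omega
  have hPN' : P.card ≤ (N.erase y).card := by
    have := Finset.pred_card_le_card_erase (s := N) (a := y)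
    omega
  obtain ⟨f0, hinj0, hTU0, hN0⟩ := exists_injOn (X.erase t) P (TU.erase y) (N.erase y)
    hPX' hNT' hXT' hPN'
  refine ⟨Function.update f0 t y, ?_, ?_, ?_, Function.update_self _ _ _⟩
  · intro a ha b hb hab
    by_cases hat : a = t <;> by_cases hbt : b = t
    · rw [hat, hbt]
    · exfalso
      have hbX : b ∈ X.erase t := Finset.mem_erase.mpr ⟨hbt, hb⟩
      rw [hat, Function.update_self, Function.update_of_ne hbt] at hab
      exact (Finset.mem_erase.mp (hTU0 b hbX)).1 hab.symm
    · exfalso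
      have haX : a ∈ X.erase t := Finset.mem_erase.mpr ⟨hat, ha⟩
      rw [hbt, Function.update_self, Function.update_of_ne hat] at hab
      exact (Finset.mem_erase.mp (hTU0 a haX)).1 hab
    · rw [Function.update_of_ne hat, Function.update_of_ne hbt] at hab
      exact hinj0 (Finset.mem_coe.mpr (Finset.mem_erase.mpr ⟨hat, ha⟩))
        (Finset.mem_coe.mpr (Finset.mem_erase.mpr ⟨hbt, hb⟩)) hab
  · intro x hx
    by_cases hxt : x = t
    · rw [hxt, Function.update_self]; exact hy
    · rw [Function.update_of_ne hxt]
      exact Finset.erase_subset _ _ (hTU0 x (Finset.mem_erase.mpr ⟨hxt, hx⟩))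
  · intro x hx
    have hxt : x ≠ t := fun he => htP (he ▸ hx)
    rw [Function.update_of_ne hxt]
    exact Finset.erase_subset _ _ (hN0 x hx)

section Master
variable {W : Type*} [Fintype W] [DecidableEq W]

lemma biUnion_comp_disjoint (hT : T.IsTree) {v : V} {I J : Finset V}
    (hIn : I ⊆ T.neighborFinset v) (hJn : J ⊆ T.neighborFinset v) (hIJ : Disjoint I J) :
    Disjoint (I.biUnion (comp T v)) (J.biUnion (comp T v)) := by
  rw [Finset.disjoint_left]
  intro x hx hx'
  obtain ⟨r, hrI, hxr⟩ := Finset.mem_biUnion.mp hx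
  obtain ⟨r', hr'J, hxr'⟩ := Finset.mem_biUnion.mp hx'
  have hne : r ≠ r' := fun he => (Finset.disjoint_left.mp hIJ) hrI (he ▸ hr'J)
  exact (Finset.disjoint_left.mp (comp_disjoint hT.IsAcyclic
    (by simpa using hIn hrI) (by simpa using hJn hr'J) hne)) hxr hxr'

lemma subset_biUnion_comp (hT : T.IsTree) {v : V} {I : Finset V}
    (hIn : I ⊆ T.neighborFinset v) : I ⊆ I.biUnion (comp T v) := by
  intro r hr
  exact Finset.mem_biUnion.mpr ⟨r, hr,
    self_mem_comp (by simpa using hIn hr : T.Adj v r).ne'⟩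

/-- Master construction, no pinning: `t1, t2` together in a part or `v ∈ {t1,t2}` with
the other in an extra slot. -/
lemma master (hT : T.IsTree) (U : SimpleGraph V) (t1 t2 : V)
    (hTdef : T = U.deleteEdges {s(t1, t2)}) (ht12ne : t1 ≠ t2)
    (G : SimpleGraph W) [DecidableRel G.Adj]
    (U1 U2 : Finset W) (hdisj : Disjoint U1 U2)
    (hind1 : ∀ a ∈ U1, ∀ b ∈ U1, ¬ G.Adj a b)
    (hind2 : ∀ a ∈ U2, ∀ b ∈ U2, ¬ G.Adj a b)
    (w : W) (hw1 : w ∉ U1) (hw2 : w ∉ U2)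
    (v : V) (I J : Finset V) (hIJ : Disjoint I J) (hIJu : I ∪ J = T.neighborFinset v)
    (EA EB : Finset V)
    (hEA : EA ⊆ I.biUnion (comp T v)) (hEB : EB ⊆ J.biUnion (comp T v))
    (hXcard : (I.biUnion (comp T v)).card ≤ U1.card)
    (hYcard : (J.biUnion (comp T v)).card ≤ U2.card)
    (hPA : (I ∪ EA).card ≤ (Gᶜ.neighborFinset w ∩ U1).card)
    (hPB : (J ∪ EB).card ≤ (Gᶜ.neighborFinset w ∩ U2).card)
    (hsame : (t1 ∈ I.biUnion (comp T v) ∧ t2 ∈ I.biUnion (comp T v)) ∨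
        (t1 ∈ J.biUnion (comp T v) ∧ t2 ∈ J.biUnion (comp T v)) ∨
        (v = t1 ∧ t2 ∈ EA ∪ EB) ∨ (v = t2 ∧ t1 ∈ EA ∪ EB)) :
    Contains Gᶜ U := by
  classical
  have hWne : Nonempty W := ⟨w⟩
  set N1 := Gᶜ.neighborFinset w ∩ U1 with hN1def
  set N2 := Gᶜ.neighborFinset w ∩ U2 with hN2def
  set X := I.biUnion (comp T v) with hXdef
  set Y := J.biUnion (comp T v) with hYdef
  have hIn : I ⊆ T.neighborFinset v := hIJu ▸ Finset.subset_union_left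
  have hJn : J ⊆ T.neighborFinset v := hIJu ▸ Finset.subset_union_right
  have hXY : Disjoint X Y := biUnion_comp_disjoint hT hIn hJn hIJ
  have hvX : v ∉ X := fun hv => by
    obtain ⟨r, -, hvr⟩ := Finset.mem_biUnion.mp hv
    exact ne_of_mem_comp hvr rfl
  have hvY : v ∉ Y := fun hv => by
    obtain ⟨r, -, hvr⟩ := Finset.mem_biUnion.mp hv
    exact ne_of_mem_comp hvr rfl
  have hcover : ∀ x : V, x = v ∨ x ∈ X ∨ x ∈ Y := by
    intro x
    by_cases hxv : x = v
    · exact Or.inl hxv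
    · right
      have : x ∈ (T.neighborFinset v).biUnion (comp T v) := by
        rw [comp_biUnion hT v]
        exact Finset.mem_erase.mpr ⟨hxv, Finset.mem_univ _⟩
      rw [← hIJu] at this
      obtain ⟨r, hr, hxr⟩ := Finset.mem_biUnion.mp this
      rcases Finset.mem_union.mp hr with h | h
      · exact Or.inl (Finset.mem_biUnion.mpr ⟨r, h, hxr⟩)
      · exact Or.inr (Finset.mem_biUnion.mpr ⟨r, h, hxr⟩)
  have hclosed : ∀ a ∈ X, ∀ b ∈ Y, ¬ T.Adj a b := by
    intro a ha b hb hab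
    obtain ⟨r, hrI, har⟩ := Finset.mem_biUnion.mp ha
    have hbv : b ≠ v := fun he => by
      obtain ⟨r', -, hbr'⟩ := Finset.mem_biUnion.mp hb
      exact ne_of_mem_comp hbr' he
    have : b ∈ X := Finset.mem_biUnion.mpr ⟨r, hrI, comp_closed hab hbv har⟩
    exact (Finset.disjoint_left.mp hXY) this hb
  have hPAX : I ∪ EA ⊆ X := Finset.union_subset (subset_biUnion_comp hT hIn) hEA
  have hPBY : J ∪ EB ⊆ Y := Finset.union_subset (subset_biUnion_comp hT hJn) hEB
  obtain ⟨fA, hinjA, hfA, hNA⟩ := exists_injOn X (I ∪ EA) U1 N1 hPAX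
    Finset.inter_subset_right hXcard hPA
  obtain ⟨fB, hinjB, hfB, hNB⟩ := exists_injOn Y (J ∪ EB) U2 N2 hPBY
    Finset.inter_subset_right hYcard hPB
  set f : V → W := fun x => if x = v then w else if x ∈ X then fA x else fB x with hfdef
  have hfv : f v = w := by simp [hfdef]
  have hfXeq : ∀ x ∈ X, f x = fA x := fun x hx => by
    have : x ≠ v := fun he => hvX (he ▸ hx)
    simp [hfdef, this, hx]
  have hfYeq : ∀ x ∈ Y, f x = fB x := fun x hx => by
    have h1 : x ≠ v := fun he => hvY (he ▸ hx)
    have h2 : x ∉ X := fun hc => (Finset.disjoint_left.mp hXY) hc hx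
    simp [hfdef, h1, h2]
  have hadjN1 : ∀ u ∈ N1, Gᶜ.Adj w u := fun u hu =>
    (SimpleGraph.mem_neighborFinset _ _ _).mp (Finset.mem_inter.mp hu).1
  have hadjN2 : ∀ u ∈ N2, Gᶜ.Adj w u := fun u hu =>
    (SimpleGraph.mem_neighborFinset _ _ _).mp (Finset.mem_inter.mp hu).1
  have hroots : ∀ b, T.Adj v b → Gᶜ.Adj w (f b) := by
    intro b hb
    have hbn : b ∈ I ∪ J := by rw [hIJu]; simpa using hb
    rcases Finset.mem_union.mp hbn with hbI | hbJ
    · have hbX : b ∈ X := subset_biUnion_comp hT hIn hbI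
      rw [hfXeq b hbX]
      exact hadjN1 _ (hNA b (Finset.mem_union_left _ hbI))
    · have hbY : b ∈ Y := subset_biUnion_comp hT hJn hbJ
      rw [hfYeq b hbY]
      exact hadjN2 _ (hNB b (Finset.mem_union_left _ hbJ))
  have ht12 : Gᶜ.Adj (f t1) (f t2) := by
    rcases hsame with ⟨h1, h2⟩ | ⟨h1, h2⟩ | ⟨h1, h2⟩ | ⟨h1, h2⟩
    · rw [hfXeq t1 h1, hfXeq t2 h2]
      refine (SimpleGraph.compl_adj _ _ _).mpr ⟨fun he => ht12ne (hinjA h1 h2 he), ?_⟩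
      exact hind1 _ (hfA t1 h1) _ (hfA t2 h2)
    · rw [hfYeq t1 h1, hfYeq t2 h2]
      refine (SimpleGraph.compl_adj _ _ _).mpr ⟨fun he => ht12ne (hinjB h1 h2 he), ?_⟩
      exact hind2 _ (hfB t1 h1) _ (hfB t2 h2)
    · rw [← h1, hfv]
      rcases Finset.mem_union.mp h2 with h2' | h2'
      · have hX : t2 ∈ X := hEA h2'
        rw [hfXeq t2 hX]
        exact hadjN1 _ (hNA t2 (Finset.mem_union_right _ h2'))
      · have hY : t2 ∈ Y := hEB h2'
        rw [hfYeq t2 hY]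
        exact hadjN2 _ (hNB t2 (Finset.mem_union_right _ h2'))
    · rw [← h1, hfv]
      refine SimpleGraph.Adj.symm ?_
      rcases Finset.mem_union.mp h2 with h2' | h2'
      · have hX : t1 ∈ X := hEA h2'
        rw [hfXeq t1 hX]
        exact hadjN1 _ (hNA t1 (Finset.mem_union_right _ h2'))
      · have hY : t1 ∈ Y := hEB h2'
        rw [hfYeq t1 hY]
        exact hadjN2 _ (hNB t1 (Finset.mem_union_right _ h2'))
  refine assemble U t1 t2 hTdef G U1 U2 hdisj hind1 hind2 w hw1 hw2 v X Y hXY hcover hclosed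
    f hfv ?_ ?_ ?_ ?_ hroots ht12
  · intro x hx; rw [hfXeq x hx]; exact hfA x hx
  · intro x hx; rw [hfYeq x hx]; exact hfB x hx
  · intro a ha b hb hab
    rw [hfXeq a ha, hfXeq b hb] at hab
    exact hinjA ha hb hab
  · intro a ha b hb hab
    rw [hfYeq a ha, hfYeq b hb] at hab
    exact hinjB ha hb hab

end Master

section MasterPin
variable {W : Type*} [Fintype W] [DecidableEq W]

/-- Master construction with pinning: `t1 ↦ y`, `t2 ↦ z` across the two cliques. -/
lemma master_pin (hT : T.IsTree) (U : SimpleGraph V) (t1 t2 : V)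
    (hTdef : T = U.deleteEdges {s(t1, t2)})
    (G : SimpleGraph W) [DecidableRel G.Adj]
    (U1 U2 : Finset W) (hdisj : Disjoint U1 U2)
    (hind1 : ∀ a ∈ U1, ∀ b ∈ U1, ¬ G.Adj a b)
    (hind2 : ∀ a ∈ U2, ∀ b ∈ U2, ¬ G.Adj a b)
    (w : W) (hw1 : w ∉ U1) (hw2 : w ∉ U2)
    (v : V) (I J : Finset V) (hIJ : Disjoint I J) (hIJu : I ∪ J = T.neighborFinset v)
    (ht1v : ¬ T.Adj v t1) (ht2v : ¬ T.Adj v t2)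
    (ht1X : t1 ∈ I.biUnion (comp T v)) (ht2Y : t2 ∈ J.biUnion (comp T v))
    (y z : W) (hy : y ∈ U1) (hz : z ∈ U2) (hyz : Gᶜ.Adj y z)
    (hXcard : (I.biUnion (comp T v)).card ≤ U1.card)
    (hYcard : (J.biUnion (comp T v)).card ≤ U2.card)
    (hPA : I.card + 1 ≤ (Gᶜ.neighborFinset w ∩ U1).card)
    (hPB : J.card + 1 ≤ (Gᶜ.neighborFinset w ∩ U2).card) :
    Contains Gᶜ U := by
  classical
  have hWne : Nonempty W := ⟨w⟩
  set N1 := Gᶜ.neighborFinset w ∩ U1 with hN1def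
  set N2 := Gᶜ.neighborFinset w ∩ U2 with hN2def
  set X := I.biUnion (comp T v) with hXdef
  set Y := J.biUnion (comp T v) with hYdef
  have hIn : I ⊆ T.neighborFinset v := hIJu ▸ Finset.subset_union_left
  have hJn : J ⊆ T.neighborFinset v := hIJu ▸ Finset.subset_union_right
  have hXY : Disjoint X Y := biUnion_comp_disjoint hT hIn hJn hIJ
  have hvX : v ∉ X := fun hv => by
    obtain ⟨r, -, hvr⟩ := Finset.mem_biUnion.mp hv
    exact ne_of_mem_comp hvr rfl
  have hvY : v ∉ Y := fun hv => by
    obtain ⟨r, -, hvr⟩ := Finset.mem_biUnion.mp hv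
    exact ne_of_mem_comp hvr rfl
  have hcover : ∀ x : V, x = v ∨ x ∈ X ∨ x ∈ Y := by
    intro x
    by_cases hxv : x = v
    · exact Or.inl hxv
    · right
      have : x ∈ (T.neighborFinset v).biUnion (comp T v) := by
        rw [comp_biUnion hT v]
        exact Finset.mem_erase.mpr ⟨hxv, Finset.mem_univ _⟩
      rw [← hIJu] at this
      obtain ⟨r, hr, hxr⟩ := Finset.mem_biUnion.mp this
      rcases Finset.mem_union.mp hr with h | h
      · exact Or.inl (Finset.mem_biUnion.mpr ⟨r, h, hxr⟩)
      · exact Or.inr (Finset.mem_biUnion.mpr ⟨r, h, hxr⟩)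
  have hclosed : ∀ a ∈ X, ∀ b ∈ Y, ¬ T.Adj a b := by
    intro a ha b hb hab
    obtain ⟨r, hrI, har⟩ := Finset.mem_biUnion.mp ha
    have hbv : b ≠ v := fun he => by
      obtain ⟨r', -, hbr'⟩ := Finset.mem_biUnion.mp hb
      exact ne_of_mem_comp hbr' he
    have : b ∈ X := Finset.mem_biUnion.mpr ⟨r, hrI, comp_closed hab hbv har⟩
    exact (Finset.disjoint_left.mp hXY) this hb
  have ht1I : t1 ∉ I := fun hc => ht1v (by simpa using hIn hc)
  have ht2J : t2 ∉ J := fun hc => ht2v (by simpa using hJn hc)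
  obtain ⟨fA, hinjA, hfA, hNA, hfAt1⟩ := exists_injOn_pin X I U1 N1 t1 y
    (subset_biUnion_comp hT hIn) Finset.inter_subset_right ht1X ht1I hy hXcard hPA
  obtain ⟨fB, hinjB, hfB, hNB, hfBt2⟩ := exists_injOn_pin Y J U2 N2 t2 z
    (subset_biUnion_comp hT hJn) Finset.inter_subset_right ht2Y ht2J hz hYcard hPB
  set f : V → W := fun x => if x = v then w else if x ∈ X then fA x else fB x with hfdef
  have hfv : f v = w := by simp [hfdef]
  have hfXeq : ∀ x ∈ X, f x = fA x := fun x hx => by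
    have : x ≠ v := fun he => hvX (he ▸ hx)
    simp [hfdef, this, hx]
  have hfYeq : ∀ x ∈ Y, f x = fB x := fun x hx => by
    have h1 : x ≠ v := fun he => hvY (he ▸ hx)
    have h2 : x ∉ X := fun hc => (Finset.disjoint_left.mp hXY) hc hx
    simp [hfdef, h1, h2]
  have hadjN1 : ∀ u ∈ N1, Gᶜ.Adj w u := fun u hu =>
    (SimpleGraph.mem_neighborFinset _ _ _).mp (Finset.mem_inter.mp hu).1
  have hadjN2 : ∀ u ∈ N2, Gᶜ.Adj w u := fun u hu =>
    (SimpleGraph.mem_neighborFinset _ _ _).mp (Finset.mem_inter.mp hu).1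
  have hroots : ∀ b, T.Adj v b → Gᶜ.Adj w (f b) := by
    intro b hb
    have hbn : b ∈ I ∪ J := by rw [hIJu]; simpa using hb
    rcases Finset.mem_union.mp hbn with hbI | hbJ
    · have hbX : b ∈ X := subset_biUnion_comp hT hIn hbI
      rw [hfXeq b hbX]
      exact hadjN1 _ (hNA b hbI)
    · have hbY : b ∈ Y := subset_biUnion_comp hT hJn hbJ
      rw [hfYeq b hbY]
      exact hadjN2 _ (hNB b hbJ)
  have ht12 : Gᶜ.Adj (f t1) (f t2) := by
    rw [hfXeq t1 ht1X, hfYeq t2 ht2Y, hfAt1, hfBt2]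
    exact hyz
  refine assemble U t1 t2 hTdef G U1 U2 hdisj hind1 hind2 w hw1 hw2 v X Y hXY hcover hclosed
    f hfv ?_ ?_ ?_ ?_ hroots ht12
  · intro x hx; rw [hfXeq x hx]; exact hfA x hx
  · intro x hx; rw [hfYeq x hx]; exact hfB x hx
  · intro a ha b hb hab
    rw [hfXeq a ha, hfXeq b hb] at hab
    exact hinjA ha hb hab
  · intro a ha b hb hab
    rw [hfYeq a ha, hfYeq b hb] at hab
    exact hinjB ha hb hab

end MasterPin

lemma card_biUnion_comp (hT : T.IsTree) {v : V} {I : Finset V}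
    (hIn : I ⊆ T.neighborFinset v) :
    (I.biUnion (comp T v)).card = ∑ r ∈ I, (comp T v r).card := by
  apply Finset.card_biUnion
  intro r hr r' hr' hne
  exact comp_disjoint hT.IsAcyclic (by simpa using hIn hr) (by simpa using hIn hr') hne

section Cases
variable {W : Type*} [Fintype W] [DecidableEq W]

/-- Case `v = t1`: all components of `T - t1` are small, `t2` gets an extra slot. -/
lemma case_vt1 (hT : T.IsTree) (U : SimpleGraph V) (t1 t2 : V)
    (hTdef : T = U.deleteEdges {s(t1, t2)}) (ht12ne : t1 ≠ t2) (hadj12 : ¬ T.Adj t1 t2)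
    (G : SimpleGraph W) [DecidableRel G.Adj]
    (U1 U2 : Finset W) (hdisj : Disjoint U1 U2)
    (hind1 : ∀ a ∈ U1, ∀ b ∈ U1, ¬ G.Adj a b)
    (hind2 : ∀ a ∈ U2, ∀ b ∈ U2, ¬ G.Adj a b)
    (w : W) (hw1 : w ∉ U1) (hw2 : w ∉ U2)
    (n m : ℕ) (hm : 18 ≤ m) (hn17 : 17 * m + 1 ≤ n) (hVcard : Fintype.card V = n)
    (hdeg : 9 * T.degree t1 < 5 * n)
    (hc1 : n - 2 * m + 2 ≤ U1.card) (hc2 : n - 2 * m + 2 ≤ U2.card)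
    (hD1 : 18 + 5 * n ≤ 18 * (Gᶜ.neighborFinset w ∩ U1).card)
    (hD2 : 18 + 5 * n ≤ 18 * (Gᶜ.neighborFinset w ∩ U2).card)
    (hallcomp : ∀ r, T.Adj t1 r → (comp T t1 r).card ≤ n - 2 * m + 2) :
    Contains Gᶜ U := by
  classical
  set A := T.neighborFinset t1 with hAdef
  set s : V → ℕ := fun r => (comp T t1 r).card with hsdef
  have hadjA : ∀ r ∈ A, T.Adj t1 r := fun r hr => by
    rw [hAdef] at hr; simpa using hr
  obtain ⟨I, hIA, hIcap, hIcnt, hJcap, hJcnt⟩ :=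
    packing A s n m U1.card U2.card
      (Gᶜ.neighborFinset w ∩ U1).card (Gᶜ.neighborFinset w ∩ U2).card (T.degree t1)
      hm hn17
      (fun r hr => Finset.card_pos.mpr ⟨r, self_mem_comp (hadjA r hr).ne'⟩)
      (fun r hr => le_trans (hallcomp r (hadjA r hr)) hc1)
      (by rw [hsdef]; rw [comp_sum_card hT t1, hVcard])
      (le_of_eq rfl) hdeg hc1 hc2 hD1 hD2
  obtain ⟨rs, hrs, ht2rs⟩ := exists_adj_avoid hT.isConnected (Ne.symm ht12ne)
  have hIn : I ⊆ A := hIA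
  have hJn : A \ I ⊆ A := Finset.sdiff_subset
  have hIJu : I ∪ (A \ I) = A := Finset.union_sdiff_of_subset hIA
  have hXc : (I.biUnion (comp T t1)).card ≤ U1.card := by
    rw [card_biUnion_comp hT hIn]; exact hIcap
  have hYc : ((A \ I).biUnion (comp T t1)).card ≤ U2.card := by
    rw [card_biUnion_comp hT hJn]; exact hJcap
  by_cases hrsI : rs ∈ I
  · refine master hT U t1 t2 hTdef ht12ne G U1 U2 hdisj hind1 hind2 w hw1 hw2 t1
      I (A \ I) (Finset.disjoint_sdiff) hIJu {t2} ∅ ?_ (Finset.empty_subset _)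
      hXc hYc ?_ ?_ ?_
    · intro x hx
      rw [Finset.mem_singleton] at hx
      exact Finset.mem_biUnion.mpr ⟨rs, hrsI, hx ▸ ht2rs⟩
    · calc (I ∪ {t2}).card ≤ I.card + ({t2} : Finset V).card := Finset.card_union_le _ _
        _ = I.card + 1 := by simp
        _ ≤ _ := hIcnt
    · rw [Finset.union_empty]; omega
    · exact Or.inr (Or.inr (Or.inl ⟨rfl, by simp⟩))
  · have hrsJ : rs ∈ A \ I := Finset.mem_sdiff.mpr ⟨by rw [hAdef]; simpa using hrs, hrsI⟩
    refine master hT U t1 t2 hTdef ht12ne G U1 U2 hdisj hind1 hind2 w hw1 hw2 t1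
      I (A \ I) (Finset.disjoint_sdiff) hIJu ∅ {t2} (Finset.empty_subset _) ?_
      hXc hYc ?_ ?_ ?_
    · intro x hx
      rw [Finset.mem_singleton] at hx
      exact Finset.mem_biUnion.mpr ⟨rs, hrsJ, hx ▸ ht2rs⟩
    · rw [Finset.union_empty]; omega
    · calc ((A \ I) ∪ {t2}).card ≤ (A \ I).card + ({t2} : Finset V).card :=
          Finset.card_union_le _ _
        _ = (A \ I).card + 1 := by simp
        _ ≤ _ := hJcnt
    · exact Or.inr (Or.inr (Or.inl ⟨rfl, by simp⟩))

end Cases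

section Cases2
variable {W : Type*} [Fintype W] [DecidableEq W]

/-- Case: `c ∉ {t1,t2}` and `t1, t2` lie in the same component of `T - c`. -/
lemma case_same (hT : T.IsTree) (U : SimpleGraph V) (t1 t2 : V)
    (hTdef : T = U.deleteEdges {s(t1, t2)}) (ht12ne : t1 ≠ t2)
    (G : SimpleGraph W) [DecidableRel G.Adj]
    (U1 U2 : Finset W) (hdisj : Disjoint U1 U2)
    (hind1 : ∀ a ∈ U1, ∀ b ∈ U1, ¬ G.Adj a b)
    (hind2 : ∀ a ∈ U2, ∀ b ∈ U2, ¬ G.Adj a b)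
    (w : W) (hw1 : w ∉ U1) (hw2 : w ∉ U2)
    (n m : ℕ) (hm : 18 ≤ m) (hn17 : 17 * m + 1 ≤ n) (hVcard : Fintype.card V = n)
    (c : V) (hdeg : 9 * T.degree c < 5 * n)
    (hcent : ∀ r, T.Adj c r → 2 * (comp T c r).card ≤ n)
    (hc1 : n - 2 * m + 2 ≤ U1.card) (hc2 : n - 2 * m + 2 ≤ U2.card)
    (hD1 : 18 + 5 * n ≤ 18 * (Gᶜ.neighborFinset w ∩ U1).card)
    (hD2 : 18 + 5 * n ≤ 18 * (Gᶜ.neighborFinset w ∩ U2).card)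
    (r1 : V) (hr1 : T.Adj c r1) (ht1c : t1 ∈ comp T c r1) (ht2c : t2 ∈ comp T c r1) :
    Contains Gᶜ U := by
  classical
  set A := T.neighborFinset c with hAdef
  set s : V → ℕ := fun r => (comp T c r).card with hsdef
  have hadjA : ∀ r ∈ A, T.Adj c r := fun r hr => by
    rw [hAdef] at hr; simpa using hr
  obtain ⟨I, hIA, hIcap, hIcnt, hJcap, hJcnt⟩ :=
    packing A s n m U1.card U2.card
      (Gᶜ.neighborFinset w ∩ U1).card (Gᶜ.neighborFinset w ∩ U2).card (T.degree c)
      hm hn17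
      (fun r hr => Finset.card_pos.mpr ⟨r, self_mem_comp (hadjA r hr).ne'⟩)
      (fun r hr => by have h1 := hcent r (hadjA r hr); simp only [hsdef]; omega)
      (by rw [hsdef]; rw [comp_sum_card hT c, hVcard])
      (le_of_eq rfl) hdeg hc1 hc2 hD1 hD2
  have hIJu : I ∪ (A \ I) = A := Finset.union_sdiff_of_subset hIA
  have hXc : (I.biUnion (comp T c)).card ≤ U1.card := by
    rw [card_biUnion_comp hT hIA]; exact hIcap
  have hYc : ((A \ I).biUnion (comp T c)).card ≤ U2.card := by
    rw [card_biUnion_comp hT Finset.sdiff_subset]; exact hJcap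
  have hr1A : r1 ∈ A := by rw [hAdef]; simpa using hr1
  refine master hT U t1 t2 hTdef ht12ne G U1 U2 hdisj hind1 hind2 w hw1 hw2 c
    I (A \ I) (Finset.disjoint_sdiff) hIJu ∅ ∅ (Finset.empty_subset _) (Finset.empty_subset _)
    hXc hYc (by rw [Finset.union_empty]; omega) (by rw [Finset.union_empty]; omega) ?_
  by_cases hr1I : r1 ∈ I
  · exact Or.inl ⟨Finset.mem_biUnion.mpr ⟨r1, hr1I, ht1c⟩,
      Finset.mem_biUnion.mpr ⟨r1, hr1I, ht2c⟩⟩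
  · have hr1J : r1 ∈ A \ I := Finset.mem_sdiff.mpr ⟨hr1A, hr1I⟩
    exact Or.inr (Or.inl ⟨Finset.mem_biUnion.mpr ⟨r1, hr1J, ht1c⟩,
      Finset.mem_biUnion.mpr ⟨r1, hr1J, ht2c⟩⟩)

end Cases2

section Cases3
variable {W : Type*} [Fintype W] [DecidableEq W]

/-- Case: `c ∉ {t1,t2}`, `t1, t2` in different components whose total size is small:
glue the two components to one side. -/
lemma case_glue (hT : T.IsTree) (U : SimpleGraph V) (t1 t2 : V)
    (hTdef : T = U.deleteEdges {s(t1, t2)}) (ht12ne : t1 ≠ t2)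
    (G : SimpleGraph W) [DecidableRel G.Adj]
    (U1 U2 : Finset W) (hdisj : Disjoint U1 U2)
    (hind1 : ∀ a ∈ U1, ∀ b ∈ U1, ¬ G.Adj a b)
    (hind2 : ∀ a ∈ U2, ∀ b ∈ U2, ¬ G.Adj a b)
    (w : W) (hw1 : w ∉ U1) (hw2 : w ∉ U2)
    (n m : ℕ) (hm : 18 ≤ m) (hn17 : 17 * m + 1 ≤ n) (hVcard : Fintype.card V = n)
    (c : V) (hdeg : 9 * T.degree c < 5 * n)
    (hcent : ∀ r, T.Adj c r → 2 * (comp T c r).card ≤ n)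
    (hc1 : n - 2 * m + 2 ≤ U1.card) (hc2 : n - 2 * m + 2 ≤ U2.card)
    (hD1 : 18 + 5 * n ≤ 18 * (Gᶜ.neighborFinset w ∩ U1).card)
    (hD2 : 18 + 5 * n ≤ 18 * (Gᶜ.neighborFinset w ∩ U2).card)
    (r1 r2 : V) (hr1 : T.Adj c r1) (hr2 : T.Adj c r2) (hr12 : r1 ≠ r2)
    (ht1c : t1 ∈ comp T c r1) (ht2c : t2 ∈ comp T c r2)
    (hglue : (comp T c r1).card + (comp T c r2).card ≤ n - 2 * m + 2) :
    Contains Gᶜ U := by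
  classical
  set A := T.neighborFinset c with hAdef
  set s : V → ℕ := fun r => (comp T c r).card with hsdef
  have hadjA : ∀ r ∈ A, T.Adj c r := fun r hr => by
    rw [hAdef] at hr; simpa using hr
  have hr1A : r1 ∈ A := by rw [hAdef]; simpa using hr1
  have hr2A : r2 ∈ A := by rw [hAdef]; simpa using hr2
  set A' := A.erase r2 with hA'def
  set s' : V → ℕ := fun r => if r = r1 then s r1 + s r2 else s r with hs'def
  have hr1A' : r1 ∈ A' := Finset.mem_erase.mpr ⟨hr12, hr1A⟩
  have hs'eq : ∀ x, x ≠ r1 → s' x = s x := fun x hx => if_neg hx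
  have hs'r1 : s' r1 = s r1 + s r2 := if_pos rfl
  have hsum' : ∑ r ∈ A', s' r = ∑ r ∈ A, s r := by
    have e1 : s' r1 + ∑ r ∈ A'.erase r1, s' r = ∑ r ∈ A', s' r :=
      Finset.add_sum_erase A' s' hr1A'
    have e2 : ∑ r ∈ A'.erase r1, s' r = ∑ r ∈ A'.erase r1, s r :=
      Finset.sum_congr rfl (fun x hx => hs'eq x (Finset.mem_erase.mp hx).1)
    have e3 : s r1 + ∑ r ∈ A'.erase r1, s r = ∑ r ∈ A', s r :=
      Finset.add_sum_erase A' s hr1A'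
    have e4 : s r2 + ∑ r ∈ A', s r = ∑ r ∈ A, s r :=
      Finset.add_sum_erase A s hr2A
    omega
  have hspos : ∀ r ∈ A, 1 ≤ s r := fun r hr =>
    Finset.card_pos.mpr ⟨r, self_mem_comp (hadjA r hr).ne'⟩
  obtain ⟨I, hIA, hIcap, hIcnt, hJcap, hJcnt⟩ :=
    packing A' s' n m U1.card U2.card
      (Gᶜ.neighborFinset w ∩ U1).card (Gᶜ.neighborFinset w ∩ U2).card (T.degree c)
      hm hn17
      (fun r hr => by
        by_cases hx : r = r1
        · rw [hx, hs'r1]; have := hspos r1 hr1A; omega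
        · rw [hs'eq r hx]; exact hspos r (Finset.erase_subset _ _ hr))
      (fun r hr => by
        by_cases hx : r = r1
        · rw [hx, hs'r1]
          calc s r1 + s r2 ≤ n - 2 * m + 2 := hglue
            _ ≤ U1.card := hc1
        · rw [hs'eq r hx]
          have h1 := hcent r (hadjA r (Finset.erase_subset _ _ hr))
          simp only [hsdef]
          omega)
      (by rw [hsum', hsdef, comp_sum_card hT c, hVcard])
      (by
        have : A'.card ≤ A.card := Finset.card_le_card (Finset.erase_subset _ _)
        have : A.card = T.degree c := rfl
        omega)
      hdeg hc1 hc2 hD1 hD2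
  have hr2I : r2 ∉ I := fun hc' => (Finset.mem_erase.mp (hIA hc')).1 rfl
  have hIsubA : I ⊆ A := hIA.trans (Finset.erase_subset _ _)
  by_cases hr1I : r1 ∈ I
  · -- glued components go to side 1
    set If : Finset V := insert r2 I with hIfdef
    have hIfA : If ⊆ A := Finset.insert_subset hr2A hIsubA
    have hJeq : A \ If = A' \ I := by
      ext x
      simp only [hIfdef, hA'def, Finset.mem_sdiff, Finset.mem_insert, Finset.mem_erase]
      tauto
    have hsumI : ∑ r ∈ If, s r = ∑ r ∈ I, s' r := by
      have e1 : ∑ r ∈ If, s r = s r2 + ∑ r ∈ I, s r := Finset.sum_insert hr2I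
      have e2 : s' r1 + ∑ r ∈ I.erase r1, s' r = ∑ r ∈ I, s' r :=
        Finset.add_sum_erase I s' hr1I
      have e3 : s r1 + ∑ r ∈ I.erase r1, s r = ∑ r ∈ I, s r :=
        Finset.add_sum_erase I s hr1I
      have e4 : ∑ r ∈ I.erase r1, s' r = ∑ r ∈ I.erase r1, s r :=
        Finset.sum_congr rfl (fun x hx => hs'eq x (Finset.mem_erase.mp hx).1)
      omega
    have hsumJ : ∑ r ∈ A \ If, s r = ∑ r ∈ A' \ I, s' r := by
      rw [hJeq]
      refine Finset.sum_congr rfl (fun x hx => (hs'eq x ?_).symm)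
      exact fun he => (Finset.mem_sdiff.mp hx).2 (he ▸ hr1I)
    refine master hT U t1 t2 hTdef ht12ne G U1 U2 hdisj hind1 hind2 w hw1 hw2 c
      If (A \ If) (Finset.disjoint_sdiff) (Finset.union_sdiff_of_subset hIfA) ∅ ∅
      (Finset.empty_subset _) (Finset.empty_subset _) ?_ ?_ ?_ ?_ ?_
    · rw [card_biUnion_comp hT hIfA]
      calc ∑ r ∈ If, (comp T c r).card = ∑ r ∈ I, s' r := hsumI
        _ ≤ U1.card := hIcap
    · rw [card_biUnion_comp hT Finset.sdiff_subset]
      calc ∑ r ∈ A \ If, (comp T c r).card = ∑ r ∈ A' \ I, s' r := hsumJ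
        _ ≤ U2.card := hJcap
    · rw [Finset.union_empty]
      have : If.card ≤ I.card + 1 := by
        rw [hIfdef]; exact Finset.card_insert_le _ _
      omega
    · rw [Finset.union_empty, hJeq]
      omega
    · exact Or.inl ⟨Finset.mem_biUnion.mpr ⟨r1, Finset.mem_insert_of_mem hr1I, ht1c⟩,
        Finset.mem_biUnion.mpr ⟨r2, Finset.mem_insert_self _ _, ht2c⟩⟩
  · -- glued components go to side 2
    have hr1J : r1 ∈ A \ I := Finset.mem_sdiff.mpr ⟨hr1A, hr1I⟩
    have hr2J : r2 ∈ A \ I := Finset.mem_sdiff.mpr ⟨hr2A, hr2I⟩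
    have hr1A'I : r1 ∈ A' \ I := Finset.mem_sdiff.mpr ⟨hr1A', hr1I⟩
    have hJeq2 : (A \ I).erase r2 = A' \ I := by
      ext x
      simp only [hA'def, Finset.mem_sdiff, Finset.mem_erase]
      tauto
    have hsumI2 : ∑ r ∈ I, s r = ∑ r ∈ I, s' r :=
      Finset.sum_congr rfl (fun x hx => (hs'eq x (fun he => hr1I (he ▸ hx))).symm)
    have hsumJ2 : ∑ r ∈ A \ I, s r = ∑ r ∈ A' \ I, s' r := by
      have e1 : s r2 + ∑ r ∈ (A \ I).erase r2, s r = ∑ r ∈ A \ I, s r :=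
        Finset.add_sum_erase _ s hr2J
      have e2 : s' r1 + ∑ r ∈ (A' \ I).erase r1, s' r = ∑ r ∈ A' \ I, s' r :=
        Finset.add_sum_erase _ s' hr1A'I
      have e3 : s r1 + ∑ r ∈ (A' \ I).erase r1, s r = ∑ r ∈ A' \ I, s r :=
        Finset.add_sum_erase _ s hr1A'I
      have e4 : ∑ r ∈ (A' \ I).erase r1, s' r = ∑ r ∈ (A' \ I).erase r1, s r :=
        Finset.sum_congr rfl (fun x hx => hs'eq x (Finset.mem_erase.mp hx).1)
      have e5 : s r2 + ∑ r ∈ A' \ I, s r = ∑ r ∈ A \ I, s r := by rw [← hJeq2]; exact e1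
      omega
    refine master hT U t1 t2 hTdef ht12ne G U1 U2 hdisj hind1 hind2 w hw1 hw2 c
      I (A \ I) (Finset.disjoint_sdiff) (Finset.union_sdiff_of_subset hIsubA) ∅ ∅
      (Finset.empty_subset _) (Finset.empty_subset _) ?_ ?_ ?_ ?_ ?_
    · rw [card_biUnion_comp hT hIsubA]
      calc ∑ r ∈ I, (comp T c r).card = ∑ r ∈ I, s' r := hsumI2
        _ ≤ U1.card := hIcap
    · rw [card_biUnion_comp hT Finset.sdiff_subset]
      calc ∑ r ∈ A \ I, (comp T c r).card = ∑ r ∈ A' \ I, s' r := hsumJ2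
        _ ≤ U2.card := hJcap
    · rw [Finset.union_empty]; omega
    · rw [Finset.union_empty]
      have e6 : (A \ I).card = (A' \ I).card + 1 := by
        rw [← hJeq2, Finset.card_erase_of_mem hr2J]
        have : 1 ≤ (A \ I).card := Finset.card_pos.mpr ⟨r2, hr2J⟩
        omega
      omega
    · exact Or.inr (Or.inl ⟨Finset.mem_biUnion.mpr ⟨r1, hr1J, ht1c⟩,
        Finset.mem_biUnion.mpr ⟨r2, hr2J, ht2c⟩⟩)

end Cases3

section Cases4
variable {W : Type*} [Fintype W] [DecidableEq W]

/-- Case: `c ∉ {t1,t2}`, `t1, t2` in different big components, `t1, t2` not adjacent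
to `c`: map `t1 ↦ y`, `t2 ↦ z` along the guaranteed crossing edge. -/
lemma case_split (hT : T.IsTree) (U : SimpleGraph V) (t1 t2 : V)
    (hTdef : T = U.deleteEdges {s(t1, t2)})
    (G : SimpleGraph W) [DecidableRel G.Adj]
    (U1 U2 : Finset W) (hdisj : Disjoint U1 U2)
    (hind1 : ∀ a ∈ U1, ∀ b ∈ U1, ¬ G.Adj a b)
    (hind2 : ∀ a ∈ U2, ∀ b ∈ U2, ¬ G.Adj a b)
    (w : W) (hw1 : w ∉ U1) (hw2 : w ∉ U2)
    (n m : ℕ) (hm : 18 ≤ m) (hn17 : 17 * m + 1 ≤ n) (hVcard : Fintype.card V = n)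
    (c : V) (hdeg : 9 * T.degree c < 5 * n)
    (hcent : ∀ r, T.Adj c r → 2 * (comp T c r).card ≤ n)
    (hc1 : n - 2 * m + 2 ≤ U1.card) (hc2 : n - 2 * m + 2 ≤ U2.card)
    (hD1 : 18 + 5 * n ≤ 18 * (Gᶜ.neighborFinset w ∩ U1).card)
    (hD2 : 18 + 5 * n ≤ 18 * (Gᶜ.neighborFinset w ∩ U2).card)
    (r1 r2 : V) (hr1 : T.Adj c r1) (hr2 : T.Adj c r2) (hr12 : r1 ≠ r2)
    (ht1c : t1 ∈ comp T c r1) (ht2c : t2 ∈ comp T c r2)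
    (hnoglue : n - 2 * m + 3 ≤ (comp T c r1).card + (comp T c r2).card)
    (hna1 : ¬ T.Adj c t1) (hna2 : ¬ T.Adj c t2)
    (y z : W) (hy : y ∈ U1) (hz : z ∈ U2) (hyz : Gᶜ.Adj y z) :
    Contains Gᶜ U := by
  classical
  set A := T.neighborFinset c with hAdef
  set s : V → ℕ := fun r => (comp T c r).card with hsdef
  have hadjA : ∀ r ∈ A, T.Adj c r := fun r hr => by
    rw [hAdef] at hr; simpa using hr
  have hr1A : r1 ∈ A := by rw [hAdef]; simpa using hr1
  have hr2A : r2 ∈ A := by rw [hAdef]; simpa using hr2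
  have hspos : ∀ r ∈ A, 1 ≤ s r := fun r hr =>
    Finset.card_pos.mpr ⟨r, self_mem_comp (hadjA r hr).ne'⟩
  have hsumA : ∑ r ∈ A, s r = n - 1 := by
    rw [hsdef, comp_sum_card hT c, hVcard]
  set others := (A.erase r1).erase r2 with hothdef
  have hr2A1 : r2 ∈ A.erase r1 := Finset.mem_erase.mpr ⟨Ne.symm hr12, hr2A⟩
  have hothcard : others.card + 2 = A.card := by
    rw [hothdef, Finset.card_erase_of_mem hr2A1, Finset.card_erase_of_mem hr1A]
    have h2 : 1 < A.card := Finset.one_lt_card.mpr ⟨r1, hr1A, r2, hr2A, hr12⟩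
    omega
  have hsumoth : s r1 + s r2 + ∑ r ∈ others, s r = n - 1 := by
    have e1 : s r1 + ∑ r ∈ A.erase r1, s r = ∑ r ∈ A, s r :=
      Finset.add_sum_erase A s hr1A
    have e2 : s r2 + ∑ r ∈ others, s r = ∑ r ∈ A.erase r1, s r :=
      Finset.add_sum_erase _ s hr2A1
    omega
  set N1c := (Gᶜ.neighborFinset w ∩ U1).card with hN1cdef
  set N2c := (Gᶜ.neighborFinset w ∩ U2).card with hN2cdef
  have hN1c2 : 2 ≤ N1c := by omega
  set q := min others.card (N1c - 2) with hqdef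
  obtain ⟨I', hI'sub, hI'card⟩ := Finset.exists_subset_card_eq (s := others) (n := q) (min_le_left _ _)
  have hr1I' : r1 ∉ I' := fun hc' =>
    (Finset.mem_erase.mp (Finset.erase_subset _ _ (hI'sub hc'))).1 rfl
  have hr2I' : r2 ∉ I' := fun hc' => (Finset.mem_erase.mp (hI'sub hc')).1 rfl
  set I : Finset V := insert r1 I' with hIdef
  have hIA : I ⊆ A := Finset.insert_subset hr1A
    (hI'sub.trans ((Finset.erase_subset _ _).trans (Finset.erase_subset _ _)))
  have hIcard : I.card = q + 1 := by
    rw [hIdef, Finset.card_insert_of_notMem hr1I', hI'card]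
  have hr2I : r2 ∉ I := by
    rw [hIdef, Finset.mem_insert]
    push_neg
    exact ⟨Ne.symm hr12, hr2I'⟩
  have hr2J : r2 ∈ A \ I := Finset.mem_sdiff.mpr ⟨hr2A, hr2I⟩
  have hr1I : r1 ∈ I := Finset.mem_insert_self _ _
  have hsumI : ∑ r ∈ I, s r = s r1 + ∑ r ∈ I', s r := Finset.sum_insert hr1I'
  have hsumI'le : ∑ r ∈ I', s r ≤ ∑ r ∈ others, s r :=
    Finset.sum_le_sum_of_subset hI'sub
  have hsumsplit : ∑ r ∈ A \ I, s r + ∑ r ∈ I, s r = ∑ r ∈ A, s r :=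
    Finset.sum_sdiff hIA
  have hcent1 : 2 * s r1 ≤ n := hcent r1 hr1
  have hcent2 : 2 * s r2 ≤ n := hcent r2 hr2
  have hJcard : (A \ I).card + I.card = A.card := Finset.card_sdiff_add_card_eq_card hIA
  have hdegA : A.card = T.degree c := rfl
  have hsr1 : s r1 = (comp T c r1).card := rfl
  have hsr2 : s r2 = (comp T c r2).card := rfl
  refine master_pin hT U t1 t2 hTdef G U1 U2 hdisj hind1 hind2 w hw1 hw2 c
    I (A \ I) (Finset.disjoint_sdiff) (Finset.union_sdiff_of_subset hIA)
    hna1 hna2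
    (Finset.mem_biUnion.mpr ⟨r1, hr1I, ht1c⟩) (Finset.mem_biUnion.mpr ⟨r2, hr2J, ht2c⟩)
    y z hy hz hyz ?_ ?_ ?_ ?_
  · rw [card_biUnion_comp hT hIA]
    have hXs : ∑ r ∈ I, (comp T c r).card = ∑ r ∈ I, s r := rfl
    omega
  · rw [card_biUnion_comp hT Finset.sdiff_subset]
    have hYs : ∑ r ∈ T.neighborFinset c \ I, (comp T c r).card = ∑ r ∈ A \ I, s r := rfl
    omega
  · -- I.card + 1 ≤ N1c
    have := min_le_right others.card (N1c - 2)
    omega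
  · -- (A \ I).card + 1 ≤ N2c
    have hcc : (T.neighborFinset c \ I).card = (A \ I).card := rfl
    rcases min_choice others.card (N1c - 2) with hmin | hmin
    · -- q = others.card : everything except r2 on side 1
      rw [← hqdef] at hmin
      omega
    · rw [← hqdef] at hmin
      omega

end Cases4

end Claim47

open Claim47 in
/-- **Claim 4.7**: with `U` unicyclic (not a cycle), `t₁t₂` an edge of its unique cycle
(i.e. an edge whose deletion leaves a tree `T`) with `t₁` not a leaf of `T` and
`Δ(T) < 5n/9`, `Ḡ` containing no `U`, `U₁, U₂` disjoint independent sets of `G` of size at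
least `n - 2m + 2`, and at least one `Ḡ`-edge between `U₁` and `U₂`: every vertex outside
`U₁ ∪ U₂` has fewer than `1 + 5n/18` `Ḡ`-neighbors in `U₁` or in `U₂`. -/
theorem unicyclic_complement_neighbors_outside_bound
    {V W : Type*} [Fintype V] [Fintype W] [DecidableEq V] [DecidableEq W]
    (m n : ℕ) (hm : 18 ≤ m) (hn : m ^ 2 - m + 1 ≤ n)
    (U : SimpleGraph V) (hUconn : U.Connected) (hUcard : Fintype.card V = n)
    (hUedges : U.edgeSet.ncard = n)
    (hnotcycle : ¬ Nonempty (U ≃g SimpleGraph.cycleGraph n))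
    (t1 t2 : V) (ht : U.Adj t1 t2)
    (T : SimpleGraph V) [DecidableRel T.Adj] (hTdef : T = U.deleteEdges {s(t1, t2)})
    (hTtree : T.IsTree) (ht1 : T.degree t1 ≠ 1)
    (hTdeg : 9 * T.maxDegree < 5 * n)
    (G : SimpleGraph W) [DecidableRel G.Adj] (hnoU : ¬ Contains Gᶜ U)
    (U1 U2 : Finset W) (hdisj : Disjoint U1 U2)
    (hind1 : ∀ a ∈ U1, ∀ b ∈ U1, ¬ G.Adj a b)
    (hind2 : ∀ a ∈ U2, ∀ b ∈ U2, ¬ G.Adj a b)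
    (hc1 : n - 2 * m + 2 ≤ U1.card) (hc2 : n - 2 * m + 2 ≤ U2.card)
    (hedge : ∃ y ∈ U1, ∃ z ∈ U2, Gᶜ.Adj y z) :
    ∀ w : W, w ∉ U1 → w ∉ U2 →
      18 * (Gᶜ.neighborFinset w ∩ U1).card < 18 + 5 * n ∨
        18 * (Gᶜ.neighborFinset w ∩ U2).card < 18 + 5 * n := by
  intro w hw1 hw2
  by_contra hcon
  push_neg at hcon
  obtain ⟨hD1, hD2⟩ := hcon
  apply hnoU
  -- arithmetic preliminaries
  have hmsq : 18 * m ≤ m ^ 2 := by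
    rw [pow_two]
    exact Nat.mul_le_mul_right m hm
  have hn17 : 17 * m + 1 ≤ n := by omega
  have hVpos : 0 < Fintype.card V := by omega
  haveI hVne : Nonempty V := Fintype.card_pos_iff.mp hVpos
  have ht12ne : t1 ≠ t2 := ht.ne
  have hadj12 : ¬ T.Adj t1 t2 := by
    rw [hTdef]
    simp [SimpleGraph.deleteEdges_adj]
  have hadj21 : ¬ T.Adj t2 t1 := fun h => hadj12 h.symm
  have hTdef2 : T = U.deleteEdges {s(t2, t1)} := by
    rw [Sym2.eq_swap]
    exact hTdef
  have hdegmax : ∀ v : V, 9 * T.degree v < 5 * n := by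
    intro v
    have h1 := SimpleGraph.degree_le_maxDegree T v
    omega
  obtain ⟨c, hcentV⟩ := exists_centroid (T := T) hTtree
  have hcent : ∀ r, T.Adj c r → 2 * (comp T c r).card ≤ n := by
    intro r hr
    have := hcentV r hr
    omega
  by_cases hct1 : c = t1
  · subst hct1
    refine case_vt1 hTtree U c t2 hTdef ht12ne hadj12 G U1 U2 hdisj hind1 hind2 w hw1 hw2
      n m hm hn17 hUcard (hdegmax c) hc1 hc2 hD1 hD2 ?_
    intro r hr
    have := hcent r hr
    omega
  by_cases hct2 : c = t2
  · subst hct2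
    refine case_vt1 hTtree U c t1 hTdef2 (Ne.symm ht12ne) hadj21 G U1 U2 hdisj hind1 hind2 w hw1 hw2
      n m hm hn17 hUcard (hdegmax c) hc1 hc2 hD1 hD2 ?_
    intro r hr
    have := hcent r hr
    omega
  -- c differs from both t1 and t2
  obtain ⟨r1, hr1, ht1c⟩ := exists_adj_avoid hTtree.isConnected (fun h : t1 = c => hct1 h.symm)
  obtain ⟨r2, hr2, ht2c⟩ := exists_adj_avoid hTtree.isConnected (fun h : t2 = c => hct2 h.symm)
  by_cases hrr : r1 = r2
  · exact case_same hTtree U t1 t2 hTdef ht12ne G U1 U2 hdisj hind1 hind2 w hw1 hw2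
      n m hm hn17 hUcard c (hdegmax c) hcent hc1 hc2 hD1 hD2 r1 hr1 ht1c (hrr ▸ ht2c)
  by_cases hglue : (comp T c r1).card + (comp T c r2).card ≤ n - 2 * m + 2
  · exact case_glue hTtree U t1 t2 hTdef ht12ne G U1 U2 hdisj hind1 hind2 w hw1 hw2
      n m hm hn17 hUcard c (hdegmax c) hcent hc1 hc2 hD1 hD2 r1 r2 hr1 hr2 hrr ht1c ht2c hglue
  have hnoglue : n - 2 * m + 3 ≤ (comp T c r1).card + (comp T c r2).card := by omega
  by_cases hat1 : T.Adj c t1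
  · -- redirect: use v = t1
    have ht1r1 : t1 = r1 := eq_root_of_adj hTtree.IsAcyclic hr1 ht1c hat1
    refine case_vt1 hTtree U t1 t2 hTdef ht12ne hadj12 G U1 U2 hdisj hind1 hind2 w hw1 hw2
      n m hm hn17 hUcard (hdegmax t1) hc1 hc2 hD1 hD2 ?_
    intro r hr
    have hS1 : comp T c t1 = comp T c r1 := by rw [ht1r1]
    have hcent2 : 2 * (comp T c r2).card ≤ n := hcent r2 hr2
    have hcent1 : 2 * (comp T c r1).card ≤ n := hcent r1 hr1
    by_cases hrc : r = c
    · rw [hrc]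
      have hdisj2 := comp_shift_disjoint hTtree hat1
      have hle : (comp T t1 c).card + (comp T c t1).card ≤ n := by
        have h1 : (comp T t1 c ∪ comp T c t1).card ≤ Fintype.card V := by
          rw [← Finset.card_univ]
          exact Finset.card_le_card (Finset.subset_univ _)
        rw [Finset.card_union_of_disjoint hdisj2] at h1
        omega
      rw [hS1] at hle
      omega
    · have hsub := comp_shift_subset hTtree hat1 hr hrc
      have hle : (comp T t1 r).card ≤ (comp T c t1).card - 1 := by
        have h1 := Finset.card_le_card hsub
        have ht1S : t1 ∈ comp T c t1 := self_mem_comp hat1.ne'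
        rw [Finset.card_erase_of_mem ht1S] at h1
        exact h1
      rw [hS1] at hle
      omega
  by_cases hat2 : T.Adj c t2
  · -- redirect: use v = t2
    have ht2r2 : t2 = r2 := eq_root_of_adj hTtree.IsAcyclic hr2 ht2c hat2
    refine case_vt1 hTtree U t2 t1 hTdef2 (Ne.symm ht12ne) hadj21 G U1 U2 hdisj hind1 hind2 w hw1 hw2
      n m hm hn17 hUcard (hdegmax t2) hc1 hc2 hD1 hD2 ?_
    intro r hr
    have hS2 : comp T c t2 = comp T c r2 := by rw [ht2r2]
    have hcent2 : 2 * (comp T c r2).card ≤ n := hcent r2 hr2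
    have hcent1 : 2 * (comp T c r1).card ≤ n := hcent r1 hr1
    by_cases hrc : r = c
    · rw [hrc]
      have hdisj2 := comp_shift_disjoint hTtree hat2
      have hle : (comp T t2 c).card + (comp T c t2).card ≤ n := by
        have h1 : (comp T t2 c ∪ comp T c t2).card ≤ Fintype.card V := by
          rw [← Finset.card_univ]
          exact Finset.card_le_card (Finset.subset_univ _)
        rw [Finset.card_union_of_disjoint hdisj2] at h1
        omega
      rw [hS2] at hle
      omega
    · have hsub := comp_shift_subset hTtree hat2 hr hrc
      have hle : (comp T t2 r).card ≤ (comp T c t2).card - 1 := by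
        have h1 := Finset.card_le_card hsub
        have ht2S : t2 ∈ comp T c t2 := self_mem_comp hat2.ne'
        rw [Finset.card_erase_of_mem ht2S] at h1
        exact h1
      rw [hS2] at hle
      omega
  · obtain ⟨y, hy, z, hz, hyz⟩ := hedge
    exact case_split hTtree U t1 t2 hTdef G U1 U2 hdisj hind1 hind2 w hw1 hw2
      n m hm hn17 hUcard c (hdegmax c) hcent hc1 hc2 hD1 hD2 r1 r2 hr1 hr2 hrr ht1c ht2c
      hnoglue hat1 hat2 y z hy hz hyz
end
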